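/- arXiv:2105.05615 — 7 statements merged into one kernel-verified Lean document; each statement's English description precedes it below -/
import Mathlib

section
/- Let c > 1. There exists a constant M1 > 0, depending only on c, with the following property. Let (E,d) be a metric space, let δ > 0 and let h : [0,δ] → [0,∞) be a gauge function satisfying the doubling condition h(2r) ≤ c·h(r) for every r ∈ (0, δ/2]. Let μ be a finite Borel measure on E and let b > 0. If limsup_{r↓0} μ(B̄(x,r))/h(r) ≤ b holds for μ-almost every x ∈ E, then for every Borel subset A of E one has h-m(A) ≥ M1 · b^{-1} · μ(A). -/
open MeasureTheory Set Filter
open scoped ENNReal NNReal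

/-- The Hausdorff measure associated with the gauge function `h` (defined on `[0, δ]`):
`h-m(A) = lim_{ε↓0} inf { Σ_i h(diam U_i) : (U_i) countable covering of A by sets of
diameter smaller than `ε` }`.  Since the infima are nondecreasing as `ε` decreases, the
limit is the supremum over `ε ∈ (0, δ)`. -/
noncomputable def gaugeHausdorff {E : Type*} [MetricSpace E] (h : ℝ → ℝ) (δ : ℝ)
    (A : Set E) : ℝ≥0∞ :=
  ⨆ (ε : ℝ) (_ : ε ∈ Set.Ioo 0 δ),
    ⨅ (U : ℕ → Set E) (_ : A ⊆ ⋃ n, U n) (_ : ∀ n, EMetric.diam (U n) < ENNReal.ofReal ε),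
      ∑' n, ENNReal.ofReal (h (EMetric.diam (U n)).toReal)

/-- If `limsup_{r↓0} μ(B̄(x,r))/h(r) ≤ b` for `μ`-almost every `x ∈ E`, then
`h-m(A) ≥ M1 b⁻¹ μ(A)` for every Borel set `A`, where `M1 > 0` only depends on the
doubling constant `c`. -/
theorem stmt2 (c : ℝ) (hc : 1 < c) :
    ∃ M1 : ℝ, 0 < M1 ∧
      ∀ (E : Type) [MetricSpace E] [MeasurableSpace E] [BorelSpace E],
      ∀ (δ : ℝ), 0 < δ →
      ∀ h : ℝ → ℝ, ContinuousOn h (Set.Icc 0 δ) → MonotoneOn h (Set.Icc 0 δ) →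
        h 0 = 0 → (∀ r ∈ Set.Ioc 0 δ, 0 < h r) →
        (∀ r ∈ Set.Ioc 0 (δ / 2), h (2 * r) ≤ c * h r) →
      ∀ (μ : Measure E), IsFiniteMeasure μ →
      ∀ (b : ℝ), 0 < b →
      (∀ᵐ x ∂μ,
        Filter.limsup (fun r : ℝ => μ (Metric.closedBall x r) / ENNReal.ofReal (h r))
          (nhdsWithin 0 (Set.Ioi 0)) ≤ ENNReal.ofReal b) →
      ∀ (A : Set E), MeasurableSet A →
      ENNReal.ofReal (M1 * b⁻¹) * μ A ≤ gaugeHausdorff h δ A := by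
  classical
  refine ⟨1/2, by norm_num, ?_⟩
  intro E _ _ _ δ hδ h hcont hmono h0 hpos _hdbl μ _ b hb hae A _hA
  set B : ℝ≥0∞ := ENNReal.ofReal (2*b) with hBdef
  have hB0 : B ≠ 0 := (ENNReal.ofReal_pos.2 (by linarith)).ne'
  have hBtop : B ≠ ∞ := ENNReal.ofReal_ne_top
  set G : ℝ → Set E := fun ε => {x | ∀ r ∈ Set.Ioo (0:ℝ) ε,
      μ (Metric.closedBall x r) ≤ B * ENNReal.ofReal (h r)} with hGdef
  -- covering estimate
  have key : ∀ ε ∈ Set.Ioo (0:ℝ) δ, ∀ U : ℕ → Set E, A ⊆ ⋃ n, U n →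
      (∀ n, EMetric.diam (U n) < ENNReal.ofReal ε) →
      μ (A ∩ G ε) ≤ B * ∑' n, ENNReal.ofReal (h (EMetric.diam (U n)).toReal) := by
    intro ε hε U hcov hdiam
    have hsub : A ∩ G ε ⊆ ⋃ n, (U n ∩ G ε) := by
      rintro x ⟨hxA, hxG⟩
      obtain ⟨n, hn⟩ := mem_iUnion.1 (hcov hxA)
      exact mem_iUnion.2 ⟨n, hn, hxG⟩
    have hterm : ∀ n, μ (U n ∩ G ε) ≤ B * ENNReal.ofReal (h (EMetric.diam (U n)).toReal) := by
      intro n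
      rcases (U n ∩ G ε).eq_empty_or_nonempty with he | ⟨x, hxU, hxG⟩
      · simp [he]
      · set d := (EMetric.diam (U n)).toReal with hd
        have hfin : EMetric.diam (U n) ≠ ∞ := ne_top_of_lt (hdiam n)
        have hdε : d < ε := by
          have h1 : ENNReal.ofReal d < ENNReal.ofReal ε := by
            rw [hd, ENNReal.ofReal_toReal hfin]; exact hdiam n
          exact (ENNReal.ofReal_lt_ofReal_iff_of_nonneg ENNReal.toReal_nonneg).1 h1
        rcases lt_or_eq_of_le (ENNReal.toReal_nonneg : (0:ℝ) ≤ d) with hd0 | hd0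
        · -- positive diameter
          have hsub2 : U n ⊆ Metric.closedBall x d := by
            intro y hy
            have h1 := EMetric.edist_le_diam_of_mem hy hxU
            have h2 : dist y x ≤ d := by
              rw [dist_edist]; exact ENNReal.toReal_mono hfin h1
            exact Metric.mem_closedBall.2 h2
          exact le_trans (measure_mono (Set.inter_subset_left.trans hsub2))
            (hxG d ⟨hd0, hdε⟩)
        · -- zero diameter
          have hdiam0 : EMetric.diam (U n) = 0 := by
            rcases (ENNReal.toReal_eq_zero_iff _).1 hd0.symm with h1 | h1
            · exact h1
            · exact absurd h1 hfin
          have hsub2 : U n ⊆ {x} := by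
            intro y hy
            have h1 := EMetric.edist_le_diam_of_mem hy hxU
            replace h1 := h1.trans hdiam0.le
            exact edist_le_zero.1 h1
          have hc0 : Tendsto h (nhdsWithin 0 (Set.Ioo 0 ε)) (nhds 0) := by
            have h1 := hcont 0 ⟨le_rfl, hδ.le⟩
            rw [ContinuousWithinAt, h0] at h1
            exact h1.mono_left (nhdsWithin_mono 0
              (fun r hr => ⟨hr.1.le, hr.2.le.trans hε.2.le⟩))
          have hlim : Tendsto (fun r => B * ENNReal.ofReal (h r))
              (nhdsWithin 0 (Set.Ioo 0 ε)) (nhds 0) := by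
            have h1 := (ENNReal.continuous_ofReal.tendsto 0).comp hc0
            have h2 := ENNReal.Tendsto.const_mul h1 (Or.inr hBtop)
            simpa using h2
          haveI : (nhdsWithin (0:ℝ) (Set.Ioo 0 ε)).NeBot := by
            rw [← mem_closure_iff_nhdsWithin_neBot, closure_Ioo hε.1.ne]
            exact ⟨le_rfl, hε.1.le⟩
          have hev : ∀ᶠ r in nhdsWithin (0:ℝ) (Set.Ioo 0 ε),
              μ {x} ≤ B * ENNReal.ofReal (h r) := by
            filter_upwards [eventually_mem_nhdsWithin] with r hr
            refine le_trans (measure_mono ?_) (hxG r hr)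
            intro y hy
            rw [Set.mem_singleton_iff] at hy
            rw [hy]
            exact Metric.mem_closedBall_self hr.1.le
          have hx0 : μ {x} ≤ 0 := ge_of_tendsto hlim hev
          have : μ (U n ∩ G ε) = 0 :=
            le_antisymm (le_trans (measure_mono (Set.inter_subset_left.trans hsub2)) hx0)
              zero_le
          simp [this]
    calc μ (A ∩ G ε) ≤ ∑' n, μ (U n ∩ G ε) :=
          (measure_mono hsub).trans (measure_iUnion_le _)
      _ ≤ ∑' n, B * ENNReal.ofReal (h (EMetric.diam (U n)).toReal) :=
          ENNReal.tsum_le_tsum hterm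
      _ = B * ∑' n, ENNReal.ofReal (h (EMetric.diam (U n)).toReal) :=
          ENNReal.tsum_mul_left
  -- sequence of scales
  set εs : ℕ → ℝ := fun n => δ / (n+2) with hεs
  have hεs_mem : ∀ n, εs n ∈ Set.Ioo 0 δ := by
    intro n
    have hn2 : (1:ℝ) < (n:ℝ) + 2 := by
      have := Nat.cast_nonneg (α := ℝ) n; linarith
    exact ⟨by positivity, div_lt_self hδ hn2⟩
  have hεs_anti : ∀ m n : ℕ, m ≤ n → εs n ≤ εs m := by
    intro m n hmn
    have h1 : (0:ℝ) < (m:ℝ) + 2 := by positivity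
    have h2 : (m:ℝ) + 2 ≤ (n:ℝ) + 2 := by
      have := Nat.cast_le (α := ℝ).2 hmn; linarith
    exact div_le_div_of_nonneg_left hδ.le h1 h2
  have hmonoG : Monotone (fun n => A ∩ G (εs n)) := by
    intro m n hmn x hx
    exact ⟨hx.1, fun r hr => hx.2 r ⟨hr.1, hr.2.trans_le (hεs_anti m n hmn)⟩⟩
  -- a.e. membership
  have haemem : ∀ᵐ x ∂μ, x ∈ ⋃ n, G (εs n) := by
    filter_upwards [hae] with x hx
    have hlt : Filter.limsup (fun r : ℝ => μ (Metric.closedBall x r) / ENNReal.ofReal (h r))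
        (nhdsWithin 0 (Set.Ioi 0)) < B := by
      refine lt_of_le_of_lt hx ?_
      rw [hBdef]
      exact (ENNReal.ofReal_lt_ofReal_iff (by linarith)).2 (by linarith)
    have hev := Filter.eventually_lt_of_limsup_lt hlt
    obtain ⟨ε, hε, hsubs⟩ := Metric.mem_nhdsWithin_iff.1 hev
    obtain ⟨n, hn⟩ := exists_nat_gt (δ / ε)
    have hεsn : εs n < ε := by
      have h1 : (0:ℝ) < (n:ℝ) + 2 := by positivity
      have h2 : δ / ε < (n:ℝ) + 2 := by linarith
      rw [hεs]
      rw [div_lt_iff₀ h1]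
      rw [div_lt_iff₀ hε] at h2
      linarith [mul_comm ε ((n:ℝ)+2)]
    refine mem_iUnion.2 ⟨n, fun r hr => ?_⟩
    have hrball : r ∈ Metric.ball (0:ℝ) ε ∩ Set.Ioi 0 := by
      constructor
      · rw [Metric.mem_ball, Real.dist_eq, sub_zero, abs_of_pos hr.1]
        exact hr.2.trans hεsn
      · exact hr.1
    have hflt := hsubs hrball
    have hhr : 0 < h r := hpos r ⟨hr.1, hr.2.le.trans (hεs_mem n).2.le⟩
    have h1 := (ENNReal.div_le_iff (ENNReal.ofReal_pos.2 hhr).ne'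
      ENNReal.ofReal_ne_top).1 (le_of_lt hflt)
    exact h1
  -- assemble
  have hμA : μ A ≤ ⨆ n, μ (A ∩ G (εs n)) := by
    have h1 : μ A ≤ μ (A ∩ ⋃ n, G (εs n)) :=
      measure_mono_ae (haemem.mono fun x hx hxA => ⟨hxA, hx⟩)
    rw [Set.inter_iUnion] at h1
    rwa [Directed.measure_iUnion (hmonoG.directed_le)] at h1
  have hM : ENNReal.ofReal (1/2 * b⁻¹) = B⁻¹ := by
    rw [hBdef, ← ENNReal.ofReal_inv_of_pos (by linarith : (0:ℝ) < 2*b), mul_inv]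
    norm_num
  rw [hM]
  calc B⁻¹ * μ A ≤ B⁻¹ * ⨆ n, μ (A ∩ G (εs n)) := mul_le_mul_right hμA _
    _ = ⨆ n, B⁻¹ * μ (A ∩ G (εs n)) := by rw [ENNReal.mul_iSup]
    _ ≤ gaugeHausdorff h δ A := by
        refine iSup_le fun n => ?_
        rw [gaugeHausdorff]
        refine le_trans ?_ (le_iSup₂ (εs n) (hεs_mem n))
        refine le_iInf fun U => le_iInf fun hcov => le_iInf fun hdiam => ?_
        have hk := key (εs n) (hεs_mem n) U hcov hdiam
        calc B⁻¹ * μ (A ∩ G (εs n))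
            ≤ B⁻¹ * (B * ∑' m, ENNReal.ofReal (h (EMetric.diam (U m)).toReal)) :=
              mul_le_mul_right hk _
          _ = ∑' m, ENNReal.ofReal (h (EMetric.diam (U m)).toReal) := by
              rw [← mul_assoc, ENNReal.inv_mul_cancel hB0 hBtop, one_mul]
end

section
/- Let c > 1. There exists a constant M2 > 0, depending only on c, with the following property. Let (E,d) be a metric space, let δ > 0 and let h : [0,δ] → [0,∞) be a gauge function satisfying the doubling condition h(2r) ≤ c·h(r) for every r ∈ (0, δ/2]. Let μ be a finite Borel measure on E and let b > 0. If the set { x ∈ E : limsup_{r↓0} μ(B̄(x,r))/h(r) < b } has h-m measure zero, then for every Borel subset A of E one has h-m(A) ≤ M2 · b^{-1} · μ(A). -/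
open MeasureTheory Set Filter
open scoped ENNReal NNReal

lemma gaugeHausdorff_mono {E : Type*} [MetricSpace E] (h : ℝ → ℝ) (δ : ℝ) {A B : Set E}
    (hAB : A ⊆ B) : gaugeHausdorff h δ A ≤ gaugeHausdorff h δ B := by
  refine iSup₂_mono fun ε hε => ?_
  refine le_iInf fun U => le_iInf fun hU => le_iInf fun hd => ?_
  exact le_trans (iInf_le _ U) (le_trans (iInf_le _ (hAB.trans hU)) (iInf_le _ hd))

lemma gaugeHausdorff_union_le {E : Type*} [MetricSpace E] (h : ℝ → ℝ) (δ : ℝ) (S T : Set E) :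
    gaugeHausdorff h δ (S ∪ T) ≤ gaugeHausdorff h δ S + gaugeHausdorff h δ T := by
  refine iSup₂_le fun ε hε => ?_
  have key : ∀ (U V : ℕ → Set E), S ⊆ ⋃ n, U n →
      (∀ n, EMetric.diam (U n) < ENNReal.ofReal ε) → T ⊆ ⋃ n, V n →
      (∀ n, EMetric.diam (V n) < ENNReal.ofReal ε) →
      (⨅ (W : ℕ → Set E) (_ : S ∪ T ⊆ ⋃ n, W n)
          (_ : ∀ n, EMetric.diam (W n) < ENNReal.ofReal ε),
        ∑' n, ENNReal.ofReal (h (EMetric.diam (W n)).toReal)) ≤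
      (∑' n, ENNReal.ofReal (h (EMetric.diam (U n)).toReal)) +
        ∑' n, ENNReal.ofReal (h (EMetric.diam (V n)).toReal) := by
    intro U V hSU hdU hTV hdV
    set W : ℕ → Set E := fun n => if Even n then U (n / 2) else V (n / 2) with hW
    have hW2 : ∀ k, W (2 * k) = U k := by
      intro k
      have h1 : Even (2 * k) := ⟨k, two_mul k⟩
      have h2 : 2 * k / 2 = k := by omega
      simp [hW, h1, h2]
    have hW2' : ∀ k, W (2 * k + 1) = V k := by
      intro k
      have h1 : ¬ Even (2 * k + 1) := by
        simp [Nat.even_add_one, parity_simps]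
      have h2 : (2 * k + 1) / 2 = k := by omega
      simp [hW, h1, h2]
    have hcov : S ∪ T ⊆ ⋃ n, W n := by
      rintro x (hx | hx)
      · obtain ⟨k, hk⟩ := mem_iUnion.1 (hSU hx)
        exact mem_iUnion.2 ⟨2 * k, by rw [hW2]; exact hk⟩
      · obtain ⟨k, hk⟩ := mem_iUnion.1 (hTV hx)
        exact mem_iUnion.2 ⟨2 * k + 1, by rw [hW2']; exact hk⟩
    have hd : ∀ n, EMetric.diam (W n) < ENNReal.ofReal ε := by
      intro n
      by_cases hn : Even n
      · simpa [hW, hn] using hdU (n / 2)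
      · simpa [hW, hn] using hdV (n / 2)
    refine le_trans (le_trans (iInf_le _ W) (le_trans (iInf_le _ hcov) (iInf_le _ hd))) ?_
    rw [← tsum_even_add_odd ENNReal.summable ENNReal.summable]
    gcongr
    · exact le_of_eq (by simp_rw [hW2])
    · exact le_of_eq (by simp_rw [hW2'])
  refine le_trans ?_ (add_le_add
    (le_iSup₂ (f := fun (ε : ℝ) (_ : ε ∈ Set.Ioo 0 δ) =>
      ⨅ (U : ℕ → Set E) (_ : S ⊆ ⋃ n, U n)
        (_ : ∀ n, EMetric.diam (U n) < ENNReal.ofReal ε),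
        ∑' n, ENNReal.ofReal (h (EMetric.diam (U n)).toReal)) ε hε)
    (le_iSup₂ (f := fun (ε : ℝ) (_ : ε ∈ Set.Ioo 0 δ) =>
      ⨅ (U : ℕ → Set E) (_ : T ⊆ ⋃ n, U n)
        (_ : ∀ n, EMetric.diam (U n) < ENNReal.ofReal ε),
        ∑' n, ENNReal.ofReal (h (EMetric.diam (U n)).toReal)) ε hε))
  simp only [ENNReal.iInf_add, ENNReal.add_iInf]
  refine le_iInf fun V => le_iInf fun hV => le_iInf fun hdV =>
    le_iInf fun U => le_iInf fun hU => le_iInf fun hdU => key U V hU hdU hV hdV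

lemma gaugeHausdorff_core {E : Type} [MetricSpace E] [MeasurableSpace E] [BorelSpace E]
    {c δ : ℝ} (hc : 1 < c) (hδ : 0 < δ) {h : ℝ → ℝ}
    (hmono : MonotoneOn h (Set.Icc 0 δ)) (h0 : h 0 = 0)
    (hpos : ∀ r ∈ Set.Ioc 0 δ, 0 < h r)
    (hdoub : ∀ r ∈ Set.Ioc 0 (δ / 2), h (2 * r) ≤ c * h r)
    (μ : Measure E) [IsFiniteMeasure μ] {b : ℝ} (hb : 0 < b)
    {G : Set E}
    (hG : ∀ x ∈ G, ENNReal.ofReal b ≤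
      Filter.limsup (fun r : ℝ => μ (Metric.closedBall x r) / ENNReal.ofReal (h r))
        (nhdsWithin 0 (Set.Ioi 0)))
    {U : Set E} (hGU : G ⊆ U) (hUo : IsOpen U) :
    gaugeHausdorff h δ G ≤ ENNReal.ofReal (2 * c ^ 3 * b⁻¹) * μ U := by
  have hc0 : (0 : ℝ) < c := lt_trans zero_lt_one hc
  refine iSup₂_le fun ε hε => ?_
  obtain ⟨hε0, hεδ⟩ := hε
  set m : ℝ := min (δ / 8) (ε / 8) with hm
  have hm0 : 0 < m := lt_min (by linarith) (by linarith)
  -- the Vitali family of balls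
  set t : Set (E × ℝ) := {p | p.1 ∈ G ∧ 0 < p.2 ∧ p.2 < m ∧ Metric.closedBall p.1 p.2 ⊆ U ∧
      ENNReal.ofReal (b / 2 * h p.2) ≤ μ (Metric.closedBall p.1 p.2)} with ht
  obtain ⟨u, hut, hdisj, hcov⟩ :=
    Vitali.exists_disjoint_subfamily_covering_enlargement_closedBall t Prod.fst Prod.snd (δ / 8)
      (fun a ha => le_of_lt (lt_of_lt_of_le ha.2.2.1 (min_le_left _ _))) 4 (by norm_num)
  -- every point of G is the center of some ball of the family
  have hGt : ∀ x ∈ G, ∃ r : ℝ, (x, r) ∈ t := by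
    intro x hx
    obtain ⟨ρ, hρ0, hρU⟩ := Metric.isOpen_iff.1 hUo x (hGU hx)
    have hb2 : ENNReal.ofReal (b / 2) <
        Filter.limsup (fun r : ℝ => μ (Metric.closedBall x r) / ENNReal.ofReal (h r))
          (nhdsWithin 0 (Set.Ioi 0)) :=
      lt_of_lt_of_le (ENNReal.ofReal_lt_ofReal_iff hb |>.2 (by linarith)) (hG x hx)
    have hfreq := Filter.frequently_lt_of_lt_limsup (by isBoundedDefault) hb2
    have hev : ∀ᶠ r in nhdsWithin (0 : ℝ) (Set.Ioi 0), r ∈ Set.Ioo 0 (min m ρ) :=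
      eventually_of_mem (Ioo_mem_nhdsGT_of_mem ⟨le_refl 0, lt_min hm0 hρ0⟩) fun r hr => hr
    obtain ⟨r, hfr, hr⟩ := (hfreq.and_eventually hev).exists
    have hr0 : 0 < r := hr.1
    have hrm : r < m := lt_of_lt_of_le hr.2 (min_le_left _ _)
    have hrρ : r < ρ := lt_of_lt_of_le hr.2 (min_le_right _ _)
    have hrδ : r ≤ δ := le_of_lt (lt_of_lt_of_le (lt_of_lt_of_le hrm (min_le_left _ _))
      (by linarith))
    have hhr : 0 < h r := hpos r ⟨hr0, hrδ⟩
    have hμr : ENNReal.ofReal (b / 2 * h r) ≤ μ (Metric.closedBall x r) := by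
      have := (ENNReal.lt_div_iff_mul_lt (Or.inl (by simpa using hhr))
        (Or.inl ENNReal.ofReal_ne_top)).1 hfr
      rw [ENNReal.ofReal_mul (by linarith)]
      exact le_of_lt this
    exact ⟨r, hx, hr0, hrm, (Metric.closedBall_subset_ball hrρ).trans hρU, hμr⟩
  -- countability of the disjoint subfamily
  have hcnt : u.Countable := by
    have hpair : Pairwise (Function.onFun Disjoint fun i : ↥u => Metric.closedBall i.1.1 i.1.2) := by
      intro i j hij
      exact hdisj i.2 j.2 fun e => hij (Subtype.ext e)
    have := MeasureTheory.Measure.countable_meas_pos_of_disjoint_iUnion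
      (μ := μ) (As := fun i : ↥u => Metric.closedBall i.1.1 i.1.2)
      (fun i => measurableSet_closedBall) hpair
    have huniv : {i : ↥u | 0 < μ (Metric.closedBall i.1.1 i.1.2)} = Set.univ := by
      refine Set.eq_univ_of_forall fun i => ?_
      have hit := hut i.2
      have hr0 : 0 < i.1.2 := hit.2.1
      have hrδ : i.1.2 ≤ δ := le_of_lt (lt_of_lt_of_le (lt_of_lt_of_le hit.2.2.1
        (min_le_left _ _)) (by linarith))
      have : (0 : ℝ≥0∞) < ENNReal.ofReal (b / 2 * h i.1.2) :=
        ENNReal.ofReal_pos.2 (mul_pos (by linarith) (hpos _ ⟨hr0, hrδ⟩))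
      exact lt_of_lt_of_le this hit.2.2.2.2
    rw [huniv] at this
    exact Set.countable_coe_iff.1 (Set.countable_univ_iff.1 this)
  haveI : Countable ↥u := hcnt.to_subtype
  obtain ⟨f, hf⟩ := Countable.exists_injective_nat ↥u
  classical
  -- the covering by enlarged balls
  set W : ℕ → Set E := fun n =>
    if hn : ∃ i : ↥u, f i = n then Metric.closedBall hn.choose.1.1 (4 * hn.choose.1.2)
    else ∅ with hWdef
  have hWkey : ∀ i : ↥u, W (f i) = Metric.closedBall i.1.1 (4 * i.1.2) := by
    intro i
    have hn : ∃ j : ↥u, f j = f i := ⟨i, rfl⟩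
    have : hn.choose = i := hf hn.choose_spec
    simp only [hWdef, dif_pos hn, this]
  have hWempty : ∀ n, n ∉ Set.range f → W n = ∅ := by
    intro n hn
    have : ¬ ∃ i : ↥u, f i = n := fun ⟨i, hi⟩ => hn ⟨i, hi⟩
    simp only [hWdef, dif_neg this]
  have hWcov : G ⊆ ⋃ n, W n := by
    intro x hx
    obtain ⟨r, hrt⟩ := hGt x hx
    obtain ⟨p, hpu, hsub⟩ := hcov (x, r) hrt
    refine mem_iUnion.2 ⟨f ⟨p, hpu⟩, ?_⟩
    rw [hWkey ⟨p, hpu⟩]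
    exact hsub (Metric.mem_closedBall_self (le_of_lt hrt.2.1))
  have hWdiam : ∀ n, EMetric.diam (W n) < ENNReal.ofReal ε := by
    intro n
    by_cases hn : ∃ i : ↥u, f i = n
    · set i := hn.choose with hi
      have hit := hut hn.choose.2
      have hr0 : (0 : ℝ) ≤ 4 * hn.choose.1.2 := by nlinarith [hit.2.1]
      have h8ε : 8 * (hn.choose.1.2 : ℝ) < ε := by
        have := lt_of_lt_of_le hit.2.2.1 (min_le_right _ _)
        linarith
      have hd : EMetric.diam (W n) ≤ ENNReal.ofReal (8 * hn.choose.1.2) := by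
        rw [hWdef]
        simp only [dif_pos hn]
        calc EMetric.diam (Metric.closedBall hn.choose.1.1 (4 * hn.choose.1.2))
            ≤ 2 * ENNReal.ofReal (4 * hn.choose.1.2) := by
              rw [← Metric.emetric_closedBall hr0]; exact EMetric.diam_closedBall
          _ = ENNReal.ofReal (8 * hn.choose.1.2) := by
              rw [← ENNReal.ofReal_ofNat 2, ← ENNReal.ofReal_mul (by norm_num)]
              norm_num; ring_nf
      exact lt_of_le_of_lt hd (ENNReal.ofReal_lt_ofReal_iff hε0 |>.2 h8ε)
    · have : W n = ∅ := by simp only [hWdef, dif_neg hn]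
      rw [this]
      rw [show EMetric.diam (∅ : Set E) = 0 from EMetric.diam_empty]; exact ENNReal.ofReal_pos.2 hε0
  -- the sum estimate
  have hterm : ∀ i : ↥u, ENNReal.ofReal (h (EMetric.diam (W (f i))).toReal) ≤
      ENNReal.ofReal (2 * c ^ 3 * b⁻¹) * μ (Metric.closedBall i.1.1 i.1.2) := by
    intro i
    rw [hWkey i]
    set r := i.1.2 with hr
    have hit := hut i.2
    have hr0 : 0 < r := hit.2.1
    have hrδ8 : r < δ / 8 := lt_of_lt_of_le hit.2.2.1 (min_le_left _ _)
    have hd8 : EMetric.diam (Metric.closedBall i.1.1 (4 * r)) ≤ ENNReal.ofReal (8 * r) := by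
      calc EMetric.diam (Metric.closedBall i.1.1 (4 * r))
          ≤ 2 * ENNReal.ofReal (4 * r) := by
            rw [← Metric.emetric_closedBall (by linarith)]; exact EMetric.diam_closedBall
        _ = ENNReal.ofReal (8 * r) := by
            rw [← ENNReal.ofReal_ofNat 2, ← ENNReal.ofReal_mul (by norm_num)]
            norm_num; ring_nf
    set d := (EMetric.diam (Metric.closedBall i.1.1 (4 * r))).toReal with hd
    have hd0 : 0 ≤ d := ENNReal.toReal_nonneg
    have hd8' : d ≤ 8 * r := by
      rw [hd]
      exact ENNReal.toReal_le_of_le_ofReal (by linarith) hd8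
    have hmem1 : d ∈ Set.Icc 0 δ := ⟨hd0, by linarith⟩
    have hmem2 : (8 : ℝ) * r ∈ Set.Icc 0 δ := ⟨by linarith, by linarith⟩
    have h1 : h d ≤ h (8 * r) := hmono hmem1 hmem2 hd8'
    have h2 : h (8 * r) ≤ c ^ 3 * h r := by
      have e1 : h (8 * r) ≤ c * h (4 * r) := by
        have := hdoub (4 * r) ⟨by linarith, by linarith⟩
        calc h (8 * r) = h (2 * (4 * r)) := by ring_nf
          _ ≤ c * h (4 * r) := this
      have e2 : h (4 * r) ≤ c * h (2 * r) := by
        have := hdoub (2 * r) ⟨by linarith, by linarith⟩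
        calc h (4 * r) = h (2 * (2 * r)) := by ring_nf
          _ ≤ c * h (2 * r) := this
      have e3 : h (2 * r) ≤ c * h r := hdoub r ⟨hr0, by linarith⟩
      calc h (8 * r) ≤ c * h (4 * r) := e1
        _ ≤ c * (c * h (2 * r)) := by
            exact mul_le_mul_of_nonneg_left e2 hc0.le
        _ ≤ c * (c * (c * h r)) := by
            exact mul_le_mul_of_nonneg_left
              (mul_le_mul_of_nonneg_left e3 hc0.le) hc0.le
        _ = c ^ 3 * h r := by ring
    have h3 : ENNReal.ofReal (h d) ≤ ENNReal.ofReal (c ^ 3 * h r) :=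
      ENNReal.ofReal_le_ofReal (le_trans h1 h2)
    have h4 : (c ^ 3 * h r : ℝ) = (2 * c ^ 3 * b⁻¹) * (b / 2 * h r) := by
      field_simp
    calc ENNReal.ofReal (h d) ≤ ENNReal.ofReal (c ^ 3 * h r) := h3
      _ = ENNReal.ofReal (2 * c ^ 3 * b⁻¹) * ENNReal.ofReal (b / 2 * h r) := by
          rw [h4, ENNReal.ofReal_mul (by positivity)]
      _ ≤ ENNReal.ofReal (2 * c ^ 3 * b⁻¹) * μ (Metric.closedBall i.1.1 i.1.2) :=
          mul_le_mul_right hit.2.2.2.2 _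
  have hsum : (∑' n, ENNReal.ofReal (h (EMetric.diam (W n)).toReal)) ≤
      ENNReal.ofReal (2 * c ^ 3 * b⁻¹) * μ U := by
    have heq : (∑' i : ↥u, ENNReal.ofReal (h (EMetric.diam (W (f i))).toReal)) =
        ∑' n, ENNReal.ofReal (h (EMetric.diam (W n)).toReal) := by
      refine hf.tsum_eq (f := fun n => ENNReal.ofReal (h (EMetric.diam (W n)).toReal)) ?_
      intro n hn
      simp only [Function.mem_support] at hn
      by_contra hnr
      rw [hWempty n hnr] at hn
      simp [h0, show EMetric.diam (∅ : Set E) = 0 from EMetric.diam_empty] at hn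
    rw [← heq]
    calc (∑' i : ↥u, ENNReal.ofReal (h (EMetric.diam (W (f i))).toReal))
        ≤ ∑' i : ↥u, ENNReal.ofReal (2 * c ^ 3 * b⁻¹) * μ (Metric.closedBall i.1.1 i.1.2) :=
          ENNReal.tsum_le_tsum hterm
      _ = ENNReal.ofReal (2 * c ^ 3 * b⁻¹) * ∑' i : ↥u, μ (Metric.closedBall i.1.1 i.1.2) :=
          ENNReal.tsum_mul_left
      _ = ENNReal.ofReal (2 * c ^ 3 * b⁻¹) *
            μ (⋃ i : ↥u, Metric.closedBall i.1.1 i.1.2) := by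
          rw [measure_iUnion ?_ fun i => measurableSet_closedBall]
          intro i j hij
          exact hdisj i.2 j.2 fun e => hij (Subtype.ext e)
      _ ≤ ENNReal.ofReal (2 * c ^ 3 * b⁻¹) * μ U := by
          gcongr
          exact iUnion_subset fun i => (hut i.2).2.2.2.1
  exact le_trans (le_trans (iInf_le _ W) (le_trans (iInf_le _ hWcov) (iInf_le _ hWdiam))) hsum

/-- If the set of points where `limsup_{r↓0} μ(B̄(x,r))/h(r) < b` has `h`-Hausdorff
measure zero, then `h-m(A) ≤ M2 b⁻¹ μ(A)` for every Borel set `A`, where `M2 > 0`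
only depends on the doubling constant `c`. -/
theorem stmt3 (c : ℝ) (hc : 1 < c) :
    ∃ M2 : ℝ, 0 < M2 ∧
      ∀ (E : Type) [MetricSpace E] [MeasurableSpace E] [BorelSpace E],
      ∀ (δ : ℝ), 0 < δ →
      ∀ h : ℝ → ℝ, ContinuousOn h (Set.Icc 0 δ) → MonotoneOn h (Set.Icc 0 δ) →
        h 0 = 0 → (∀ r ∈ Set.Ioc 0 δ, 0 < h r) →
        (∀ r ∈ Set.Ioc 0 (δ / 2), h (2 * r) ≤ c * h r) →
      ∀ (μ : Measure E), IsFiniteMeasure μ →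
      ∀ (b : ℝ), 0 < b →
      gaugeHausdorff h δ
          {x : E |
            Filter.limsup (fun r : ℝ => μ (Metric.closedBall x r) / ENNReal.ofReal (h r))
              (nhdsWithin 0 (Set.Ioi 0)) < ENNReal.ofReal b} = 0 →
      ∀ (A : Set E), MeasurableSet A →
      gaugeHausdorff h δ A ≤ ENNReal.ofReal (M2 * b⁻¹) * μ A := by
  have hc0 : (0 : ℝ) < c := lt_trans zero_lt_one hc
  refine ⟨2 * c ^ 3, by positivity, ?_⟩
  intro E _ _ _ δ hδ h hcont hmono h0 hpos hdoub μ hfin b hb hnull A hA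
  set B : Set E := {x : E |
      Filter.limsup (fun r : ℝ => μ (Metric.closedBall x r) / ENNReal.ofReal (h r))
        (nhdsWithin 0 (Set.Ioi 0)) < ENNReal.ofReal b} with hB
  set K : ℝ≥0∞ := ENNReal.ofReal (2 * c ^ 3 * b⁻¹) with hK
  have hK0 : K ≠ 0 := (ENNReal.ofReal_pos.2 (by positivity)).ne'
  have hKtop : K ≠ ∞ := ENNReal.ofReal_ne_top
  have hmain : gaugeHausdorff h δ (A \ B) ≤ K * μ A := by
    refine ENNReal.le_of_forall_pos_le_add fun η hη _ => ?_
    have hημ : (η : ℝ≥0∞) / K ≠ 0 := by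
      simp only [ne_eq, ENNReal.div_eq_zero_iff, not_or]
      exact ⟨ENNReal.coe_ne_zero.2 hη.ne', hKtop⟩
    have hlt : μ A < μ A + η / K := ENNReal.lt_add_right (measure_ne_top μ A) hημ
    obtain ⟨U, hAU, hUo, hUlt⟩ := Set.exists_isOpen_lt_of_lt A _ hlt
    have hG : ∀ x ∈ A \ B, ENNReal.ofReal b ≤
        Filter.limsup (fun r : ℝ => μ (Metric.closedBall x r) / ENNReal.ofReal (h r))
          (nhdsWithin 0 (Set.Ioi 0)) := fun x hx => not_lt.1 hx.2
    have hcore := gaugeHausdorff_core hc hδ hmono h0 hpos hdoub μ hb hG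
      ((Set.diff_subset).trans hAU) hUo
    calc gaugeHausdorff h δ (A \ B) ≤ K * μ U := hcore
      _ ≤ K * (μ A + η / K) := mul_le_mul_right hUlt.le _
      _ = K * μ A + K * (η / K) := mul_add _ _ _
      _ = K * μ A + η := by rw [ENNReal.mul_div_cancel hK0 hKtop]
  calc gaugeHausdorff h δ A = gaugeHausdorff h δ ((A \ B) ∪ (A ∩ B)) := by
        rw [Set.diff_union_inter]
    _ ≤ gaugeHausdorff h δ (A \ B) + gaugeHausdorff h δ (A ∩ B) :=
        gaugeHausdorff_union_le h δ _ _
    _ ≤ K * μ A + gaugeHausdorff h δ B :=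
        add_le_add hmain (gaugeHausdorff_mono h δ Set.inter_subset_right)
    _ = K * μ A := by rw [hnull, add_zero]
    _ = ENNReal.ofReal (2 * c ^ 3 * b⁻¹) * μ A := rfl
end

section
/- Let σ > 0 and let ŵ : [0,σ] → ℝ be continuous with ŵ(0) = ŵ(σ). Let p ≥ 1 be an integer, let s, t ∈ [0,σ], and let s_0, t_0, s_1, t_1, …, s_p, t_p ∈ [0,σ] satisfy s_0 = s, t_p = t and ŵ(s_i) = ŵ(t_i) for every i ∈ {0,1,…,p}. Then for every j ∈ {1,…,p}: Σ_{i=1}^p D°(t_{i−1}, s_i) ≥ ŵ(s) + ŵ(t) − 2·max( min_{r∈[t_{j−1},s_j]} ŵ(r), min_{r∈[s_j,t_{j−1}]} ŵ(r) ). -/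
open Set

/-- The "cyclic interval" `[s,t]` in `[0,σ]`: the usual interval when `s ≤ t`, and
`[s,σ] ∪ [0,t]` when `s > t`. -/
def cycIcc (σ s t : ℝ) : Set ℝ := if s ≤ t then Set.Icc s t else Set.Icc s σ ∪ Set.Icc 0 t

/-- `D°(s,t) = ŵ(s) + ŵ(t) - 2 max( min_{r∈[s,t]} ŵ(r), min_{r∈[t,s]} ŵ(r) )`,
with the cyclic convention for intervals. -/
noncomputable def Dcirc (σ : ℝ) (w : ℝ → ℝ) (s t : ℝ) : ℝ :=
  w s + w t - 2 * max (sInf (w '' cycIcc σ s t)) (sInf (w '' cycIcc σ t s))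

lemma mem_cycIcc_left {σ s t : ℝ} (hs : s ∈ Set.Icc 0 σ) (ht : t ∈ Set.Icc 0 σ) :
    s ∈ cycIcc σ s t := by
  unfold cycIcc; split_ifs with h
  · exact ⟨le_refl s, h⟩
  · exact Or.inl ⟨le_refl s, hs.2⟩

lemma mem_cycIcc_right {σ s t : ℝ} (hs : s ∈ Set.Icc 0 σ) (ht : t ∈ Set.Icc 0 σ) :
    t ∈ cycIcc σ s t := by
  unfold cycIcc; split_ifs with h
  · exact ⟨h, le_refl t⟩
  · exact Or.inr ⟨ht.1, le_refl t⟩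

lemma cycIcc_subset {σ s t : ℝ} (hs : s ∈ Set.Icc 0 σ) (ht : t ∈ Set.Icc 0 σ) :
    cycIcc σ s t ⊆ Set.Icc 0 σ := by
  unfold cycIcc; split_ifs with h
  · exact Set.Icc_subset_Icc hs.1 ht.2
  · rintro x (hx | hx)
    · exact ⟨hs.1.trans hx.1, hx.2⟩
    · exact ⟨hx.1, hx.2.trans ht.2⟩

lemma sInf_cyc_le {σ : ℝ} {w : ℝ → ℝ} (hw : ContinuousOn w (Set.Icc 0 σ))
    {s t : ℝ} (hs : s ∈ Set.Icc 0 σ) (ht : t ∈ Set.Icc 0 σ) :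
    sInf (w '' cycIcc σ s t) ≤ w s ∧ sInf (w '' cycIcc σ s t) ≤ w t := by
  have hbdd : BddBelow (w '' cycIcc σ s t) :=
    ((isCompact_Icc.image_of_continuousOn hw).bddBelow).mono
      (Set.image_mono (f := w) (cycIcc_subset hs ht))
  exact ⟨csInf_le hbdd ⟨s, mem_cycIcc_left hs ht, rfl⟩,
         csInf_le hbdd ⟨t, mem_cycIcc_right hs ht, rfl⟩⟩

lemma Dcirc_ge {σ : ℝ} {w : ℝ → ℝ} (hw : ContinuousOn w (Set.Icc 0 σ))
    {s t : ℝ} (hs : s ∈ Set.Icc 0 σ) (ht : t ∈ Set.Icc 0 σ) :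
    w s - w t ≤ Dcirc σ w s t ∧ w t - w s ≤ Dcirc σ w s t := by
  have h1 := sInf_cyc_le hw hs ht
  have h2 := sInf_cyc_le hw ht hs
  unfold Dcirc
  constructor
  · have : max (sInf (w '' cycIcc σ s t)) (sInf (w '' cycIcc σ t s)) ≤ w t :=
      max_le h1.2 h2.1
    linarith
  · have : max (sInf (w '' cycIcc σ s t)) (sInf (w '' cycIcc σ t s)) ≤ w s :=
      max_le h1.1 h2.2
    linarith

theorem stmt4 (σ : ℝ) (hσ : 0 < σ) (w : ℝ → ℝ)
    (hw : ContinuousOn w (Set.Icc 0 σ)) (hw0 : w 0 = w σ)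
    (p : ℕ) (hp : 1 ≤ p) (s t : ℝ) (hs : s ∈ Set.Icc 0 σ) (ht : t ∈ Set.Icc 0 σ)
    (a b : ℕ → ℝ)
    (ha : ∀ i ≤ p, a i ∈ Set.Icc 0 σ) (hb : ∀ i ≤ p, b i ∈ Set.Icc 0 σ)
    (has : a 0 = s) (hbt : b p = t)
    (heq : ∀ i ≤ p, w (a i) = w (b i)) :
    ∀ j, 1 ≤ j → j ≤ p →
      w s + w t -
          2 * max (sInf (w '' cycIcc σ (b (j - 1)) (a j)))
                (sInf (w '' cycIcc σ (a j) (b (j - 1)))) ≤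
        ∑ i ∈ Finset.range p, Dcirc σ w (b i) (a (i + 1)) := by
  intro j hj1 hjp
  have key : ∀ i, i < p →
      (w (b i) - w (a (i+1)) ≤ Dcirc σ w (b i) (a (i+1)) ∧
       w (a (i+1)) - w (b i) ≤ Dcirc σ w (b i) (a (i+1))) := fun i hi =>
    Dcirc_ge hw (hb i hi.le) (ha (i+1) hi)
  -- telescoping from the left
  have tele1 : ∀ k, k ≤ p →
      w s - w (b k) ≤ ∑ i ∈ Finset.range k, Dcirc σ w (b i) (a (i + 1)) := by
    intro k hk
    induction k with
    | zero =>
      have h0 : w (b 0) = w s := by rw [← has]; exact (heq 0 (Nat.zero_le p)).symm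
      simp [h0]
    | succ k ih =>
      rw [Finset.sum_range_succ]
      have h1 := ih (Nat.le_of_succ_le hk)
      have h2 := (key k (Nat.lt_of_succ_le hk)).1
      have h3 : w (b (k+1)) = w (a (k+1)) := (heq (k+1) hk).symm
      linarith
  -- telescoping from the right
  have tele2 : ∀ m, j + m ≤ p →
      w (b (j + m)) - w (a j) ≤ ∑ i ∈ Finset.Ico j (j + m), Dcirc σ w (b i) (a (i + 1)) := by
    intro m hm
    induction m with
    | zero =>
      simp [heq j hjp]
    | succ m ih =>
      have hjm : j + m ≤ p := by omega
      have h1 := ih hjm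
      have h2 := (key (j + m) (by omega)).2
      have h3 : w (b (j + m + 1)) = w (a (j + m + 1)) := (heq (j + m + 1) (by omega)).symm
      have hsplit : ∑ i ∈ Finset.Ico j (j + (m+1)), Dcirc σ w (b i) (a (i + 1)) =
          ∑ i ∈ Finset.Ico j (j + m), Dcirc σ w (b i) (a (i + 1)) +
            Dcirc σ w (b (j + m)) (a (j + m + 1)) := by
        have : j + (m + 1) = (j + m) + 1 := by omega
        rw [this, Finset.sum_Ico_succ_top (by omega)]
      rw [hsplit, show j + (m+1) = j + m + 1 from rfl]
      linarith
  have h1 := tele1 (j - 1) (by omega)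
  have h2 := tele2 (p - j) (by omega)
  rw [Nat.add_sub_cancel' hjp] at h2
  -- split the total sum
  have hsplit : ∑ i ∈ Finset.range p, Dcirc σ w (b i) (a (i + 1)) =
      (∑ i ∈ Finset.range (j-1), Dcirc σ w (b i) (a (i + 1))) +
        Dcirc σ w (b (j-1)) (a j) +
        ∑ i ∈ Finset.Ico j p, Dcirc σ w (b i) (a (i + 1)) := by
    rw [Finset.range_eq_Ico, ← Finset.sum_Ico_consecutive _ (Nat.zero_le (j-1)) (by omega : j - 1 ≤ p),
        Finset.sum_eq_sum_Ico_succ_bot (by omega : j - 1 < p), ← Finset.range_eq_Ico]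
    have hj' : j - 1 + 1 = j := by omega
    rw [hj']
    ring
  rw [hsplit]
  have hD := Dcirc_ge hw (hb (j-1) (by omega)) (ha j hjp)
  have hbp : w (b p) = w t := by rw [hbt]
  have hDj : Dcirc σ w (b (j-1)) (a j) =
      w (b (j-1)) + w (a j) -
        2 * max (sInf (w '' cycIcc σ (b (j - 1)) (a j)))
              (sInf (w '' cycIcc σ (a j) (b (j - 1)))) := rfl
  linarith [h1, h2, hDj]
end

section
/- Let σ > 0, let ζ : [0,σ] → [0,∞) be continuous with ζ(0) = ζ(σ) = 0, and let ŵ : [0,σ] → ℝ be continuous and satisfy ŵ(u) = ŵ(v) whenever u ∼ v. Then for every s, t ∈ [0,σ], D(s,t) ≥ |ŵ(s) − ŵ(t)|. -/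
open Set

/-- The equivalence relation `u ∼ v` coded by the lifetime function `ζ`:
`u ∼ v` iff `ζ(u) = ζ(v) = min_{r ∈ [u∧v, u∨v]} ζ(r)`. -/
def treeRel (ζ : ℝ → ℝ) (u v : ℝ) : Prop :=
  ζ u = ζ v ∧ ζ u = sInf (ζ '' Set.Icc (min u v) (max u v))

/-- `D(s,t) = inf { Σ_{i=1}^p D°(t_{i-1}, s_i) }`, the infimum being over all `p ≥ 1`
and all choices of `s_0,t_0,…,s_p,t_p ∈ [0,σ]` with `s_0 = s`, `t_p = t` and
`s_i ∼ t_i` for every `i`. -/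
noncomputable def snakeDist (σ : ℝ) (ζ w : ℝ → ℝ) (s t : ℝ) : ℝ :=
  sInf {x : ℝ | ∃ p : ℕ, 1 ≤ p ∧ ∃ a b : ℕ → ℝ,
    a 0 = s ∧ b p = t ∧
    (∀ i ≤ p, a i ∈ Set.Icc 0 σ ∧ b i ∈ Set.Icc 0 σ ∧ treeRel ζ (a i) (b i)) ∧
    x = ∑ i ∈ Finset.range p, Dcirc σ w (b i) (a (i + 1))}

lemma abs_le_dcirc {σ : ℝ} {w : ℝ → ℝ} (hbdd : BddBelow (w '' Set.Icc 0 σ))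
    {s t : ℝ} (hs : s ∈ Set.Icc 0 σ) (ht : t ∈ Set.Icc 0 σ) :
    |w s - w t| ≤ Dcirc σ w s t := by
  have key : ∀ u v : ℝ, u ∈ Set.Icc 0 σ → v ∈ Set.Icc 0 σ → ∀ x ∈ cycIcc σ u v,
      sInf (w '' cycIcc σ u v) ≤ w x := by
    intro u v hu hv x hx
    exact csInf_le (hbdd.mono (Set.image_mono (cycIcc_subset hu hv)))
      (Set.mem_image_of_mem _ hx)
  have h1s := key s t hs ht s (mem_cycIcc_left hs ht)
  have h1t := key s t hs ht t (mem_cycIcc_right hs ht)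
  have h2s := key t s ht hs s (mem_cycIcc_right ht hs)
  have h2t := key t s ht hs t (mem_cycIcc_left ht hs)
  have hMs : max (sInf (w '' cycIcc σ s t)) (sInf (w '' cycIcc σ t s)) ≤ w s :=
    max_le h1s h2s
  have hMt : max (sInf (w '' cycIcc σ s t)) (sInf (w '' cycIcc σ t s)) ≤ w t :=
    max_le h1t h2t
  rw [abs_sub_le_iff]
  unfold Dcirc
  constructor <;> linarith

lemma telescope (g : ℕ → ℝ) (p : ℕ) :
    |g 0 - g p| ≤ ∑ i ∈ Finset.range p, |g i - g (i + 1)| := by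
  induction p with
  | zero => simp
  | succ n ih =>
    rw [Finset.sum_range_succ]
    calc |g 0 - g (n+1)| ≤ |g 0 - g n| + |g n - g (n+1)| := abs_sub_le _ _ _
    _ ≤ _ := by linarith

theorem stmt5 (σ : ℝ) (hσ : 0 < σ) (ζ : ℝ → ℝ)
    (hζ : ContinuousOn ζ (Set.Icc 0 σ)) (hζpos : ∀ r ∈ Set.Icc 0 σ, 0 ≤ ζ r)
    (hζ0 : ζ 0 = 0) (hζσ : ζ σ = 0)
    (w : ℝ → ℝ) (hw : ContinuousOn w (Set.Icc 0 σ))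
    (hcomp : ∀ u ∈ Set.Icc 0 σ, ∀ v ∈ Set.Icc 0 σ, treeRel ζ u v → w u = w v) :
    ∀ s ∈ Set.Icc 0 σ, ∀ t ∈ Set.Icc 0 σ, |w s - w t| ≤ snakeDist σ ζ w s t := by
  intro s hs t ht
  have hbdd : BddBelow (w '' Set.Icc 0 σ) :=
    ((isCompact_Icc.image_of_continuousOn hw).bddBelow)
  have hrefl : ∀ u : ℝ, treeRel ζ u u := by
    intro u
    refine ⟨rfl, ?_⟩
    simp [Set.Icc_self]
  apply le_csInf
  · refine ⟨Dcirc σ w s t, 1, le_rfl, (fun i => if i = 0 then s else t),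
      (fun i => if i = 0 then s else t), by simp, by simp, ?_, by simp⟩
    intro i hi
    interval_cases i <;> simp [hs, ht, hrefl]
  · rintro x ⟨p, hp, a, b, ha0, hbp, hmem, rfl⟩
    have hweq : ∀ i ≤ p, w (a i) = w (b i) := by
      intro i hi
      exact hcomp _ (hmem i hi).1 _ (hmem i hi).2.1 (hmem i hi).2.2
    have h1 : w s = w (b 0) := ha0 ▸ hweq 0 (Nat.zero_le p)
    have h2 : |w (b 0) - w (b p)| ≤ ∑ i ∈ Finset.range p, |w (b i) - w (b (i+1))| :=
      telescope (fun i => w (b i)) p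
    calc |w s - w t| = |w (b 0) - w (b p)| := by rw [h1, hbp]
    _ ≤ ∑ i ∈ Finset.range p, |w (b i) - w (b (i+1))| := h2
    _ ≤ ∑ i ∈ Finset.range p, Dcirc σ w (b i) (a (i+1)) := by
        apply Finset.sum_le_sum
        intro i hi
        rw [Finset.mem_range] at hi
        rw [← hweq (i+1) hi]
        exact abs_le_dcirc hbdd (hmem i (le_of_lt hi)).2.1 (hmem (i+1) hi).1
end

section
/- Let σ > 0, let ζ : [0,σ] → [0,∞) be continuous with ζ(0) = ζ(σ) = 0, and let ŵ : [0,σ] → ℝ be continuous and satisfy ŵ(u) = ŵ(v) whenever u ∼ v. Suppose r ∈ [0,σ] attains the minimum of ŵ, i.e. ŵ(r) = min_{u∈[0,σ]} ŵ(u). Then for every t ∈ [0,σ], D(r,t) = ŵ(t) − ŵ(r). -/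
open Set

theorem stmt6 (σ : ℝ) (hσ : 0 < σ) (ζ : ℝ → ℝ)
    (hζ : ContinuousOn ζ (Set.Icc 0 σ)) (hζpos : ∀ r ∈ Set.Icc 0 σ, 0 ≤ ζ r)
    (hζ0 : ζ 0 = 0) (hζσ : ζ σ = 0)
    (w : ℝ → ℝ) (hw : ContinuousOn w (Set.Icc 0 σ))
    (hcomp : ∀ u ∈ Set.Icc 0 σ, ∀ v ∈ Set.Icc 0 σ, treeRel ζ u v → w u = w v)
    (r : ℝ) (hr : r ∈ Set.Icc 0 σ) (hrmin : w r = sInf (w '' Set.Icc 0 σ)) :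
    ∀ t ∈ Set.Icc 0 σ, snakeDist σ ζ w r t = w t - w r := by
  intro t ht
  have hbdd : BddBelow (w '' Set.Icc 0 σ) :=
    (isCompact_Icc.image_of_continuousOn hw).bddBelow
  have hmin : ∀ u ∈ Set.Icc 0 σ, w r ≤ w u := fun u hu =>
    hrmin ▸ csInf_le hbdd ⟨u, hu, rfl⟩
  have hsub : ∀ s ∈ Set.Icc 0 σ, ∀ u ∈ Set.Icc 0 σ, cycIcc σ s u ⊆ Set.Icc 0 σ := by
    intro s hs u hu
    unfold cycIcc
    split_ifs
    · exact Set.Icc_subset_Icc hs.1 hu.2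
    · exact Set.union_subset (Set.Icc_subset_Icc hs.1 le_rfl)
        (Set.Icc_subset_Icc le_rfl hu.2)
  have hmem1 : ∀ s ∈ Set.Icc 0 σ, ∀ u ∈ Set.Icc 0 σ, s ∈ cycIcc σ s u := by
    intro s hs u hu
    unfold cycIcc
    split_ifs with h
    · exact ⟨le_rfl, h⟩
    · exact Or.inl ⟨le_rfl, hs.2⟩
  have hmem2 : ∀ s ∈ Set.Icc 0 σ, ∀ u ∈ Set.Icc 0 σ, u ∈ cycIcc σ s u := by
    intro s hs u hu
    unfold cycIcc
    split_ifs with h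
    · exact ⟨h, le_rfl⟩
    · exact Or.inr ⟨hu.1, le_rfl⟩
  -- basic sInf facts on cyclic intervals
  have hbdd' : ∀ s ∈ Set.Icc 0 σ, ∀ u ∈ Set.Icc 0 σ, BddBelow (w '' cycIcc σ s u) :=
    fun s hs u hu => hbdd.mono (Set.image_mono (f := w) (hsub s hs u hu))
  have hinf_le1 : ∀ s ∈ Set.Icc 0 σ, ∀ u ∈ Set.Icc 0 σ,
      sInf (w '' cycIcc σ s u) ≤ w s :=
    fun s hs u hu => csInf_le (hbdd' s hs u hu) ⟨s, hmem1 s hs u hu, rfl⟩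
  have hinf_le2 : ∀ s ∈ Set.Icc 0 σ, ∀ u ∈ Set.Icc 0 σ,
      sInf (w '' cycIcc σ s u) ≤ w u :=
    fun s hs u hu => csInf_le (hbdd' s hs u hu) ⟨u, hmem2 s hs u hu, rfl⟩
  have hinf_ge : ∀ s ∈ Set.Icc 0 σ, ∀ u ∈ Set.Icc 0 σ,
      w r ≤ sInf (w '' cycIcc σ s u) := by
    intro s hs u hu
    refine le_csInf ⟨w s, ⟨s, hmem1 s hs u hu, rfl⟩⟩ ?_
    rintro x ⟨y, hy, rfl⟩
    exact hmin y (hsub s hs u hu hy)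
  -- lower bound for Dcirc
  have hDlb : ∀ s ∈ Set.Icc 0 σ, ∀ u ∈ Set.Icc 0 σ, |w s - w u| ≤ Dcirc σ w s u := by
    intro s hs u hu
    have h1 := hinf_le1 s hs u hu
    have h2 := hinf_le2 s hs u hu
    have h3 := hinf_le1 u hu s hs
    have h4 := hinf_le2 u hu s hs
    rw [abs_sub_le_iff]
    unfold Dcirc
    constructor
    · have : max (sInf (w '' cycIcc σ s u)) (sInf (w '' cycIcc σ u s)) ≤ w u :=
        max_le h2 h3
      linarith
    · have : max (sInf (w '' cycIcc σ s u)) (sInf (w '' cycIcc σ u s)) ≤ w s :=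
        max_le h1 h4
      linarith
  -- Dcirc from r
  have hDr : Dcirc σ w r t = w t - w r := by
    have e1 : sInf (w '' cycIcc σ r t) = w r :=
      le_antisymm (hinf_le1 r hr t ht) (hinf_ge r hr t ht)
    have e2 : sInf (w '' cycIcc σ t r) = w r :=
      le_antisymm (hinf_le2 t ht r hr) (hinf_ge t ht r hr)
    unfold Dcirc
    rw [e1, e2, max_self]
    ring
  have hrefl : ∀ u : ℝ, treeRel ζ u u := by
    intro u
    refine ⟨rfl, ?_⟩
    rw [min_self, max_self, Set.Icc_self, Set.image_singleton, csInf_singleton]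
  set S : Set ℝ := {x : ℝ | ∃ p : ℕ, 1 ≤ p ∧ ∃ a b : ℕ → ℝ,
    a 0 = r ∧ b p = t ∧
    (∀ i ≤ p, a i ∈ Set.Icc 0 σ ∧ b i ∈ Set.Icc 0 σ ∧ treeRel ζ (a i) (b i)) ∧
    x = ∑ i ∈ Finset.range p, Dcirc σ w (b i) (a (i + 1))} with hS
  have hmemS : (w t - w r) ∈ S := by
    refine ⟨1, le_rfl, (fun i => if i = 0 then r else t), (fun i => if i = 0 then r else t),
      if_pos rfl, if_neg one_ne_zero, ?_, ?_⟩
    · intro i _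
      by_cases hi : i = 0 <;> simp [hi, hr, ht, hrefl]
    · simp [hDr]
  have hlbS : ∀ x ∈ S, w t - w r ≤ x := by
    rintro x ⟨p, hp, a, b, ha0, hbp, hmemab, rfl⟩
    have hwab : ∀ i ≤ p, w (a i) = w (b i) := fun i hi =>
      hcomp _ (hmemab i hi).1 _ (hmemab i hi).2.1 (hmemab i hi).2.2
    have key : ∀ i ∈ Finset.range p, |w (a i) - w (a (i + 1))| ≤
        Dcirc σ w (b i) (a (i + 1)) := by
      intro i hi
      rw [Finset.mem_range] at hi
      rw [hwab i hi.le]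
      exact hDlb _ (hmemab i hi.le).2.1 _ (hmemab (i + 1) hi).1
    have htel : |w (a 0) - w (a p)| ≤
        ∑ i ∈ Finset.range p, |w (a i) - w (a (i + 1))| := by
      have := Finset.sum_range_sub' (fun i => w (a i)) p
      calc |w (a 0) - w (a p)| = |∑ i ∈ Finset.range p, (w (a i) - w (a (i + 1)))| := by
            rw [this]
        _ ≤ _ := Finset.abs_sum_le_sum_abs _ _
    have hfin : w t - w r ≤ |w (a 0) - w (a p)| := by
      have h1 : w (a 0) = w r := by rw [ha0]
      have h2 : w (a p) = w t := by rw [hwab p le_rfl, hbp]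
      rw [h1, h2, abs_sub_comm, abs_of_nonneg (by linarith [hmin t ht])]
    calc w t - w r ≤ |w (a 0) - w (a p)| := hfin
      _ ≤ ∑ i ∈ Finset.range p, |w (a i) - w (a (i + 1))| := htel
      _ ≤ ∑ i ∈ Finset.range p, Dcirc σ w (b i) (a (i + 1)) := Finset.sum_le_sum key
  have : snakeDist σ ζ w r t = sInf S := rfl
  rw [this]
  exact le_antisymm (csInf_le ⟨w t - w r, fun x hx => hlbS x hx⟩ hmemS)
    (le_csInf ⟨_, hmemS⟩ hlbS)
end

section
/- Let c̃1, c̃2, C1, C2 > 0. There exist constants c̃ > 0 and α0 > 0, depending only on c̃1, c̃2, C1 and C2, with the following property: whenever X is a nonnegative random variable on a probability space (Ω, F, P) such that c̃1 · C1^p · p! ≤ E[X^p] ≤ c̃2 · C2^p · p! for every integer p ≥ 1, then for every u ≥ 0 one has P(X > u) ≥ c̃ · e^{−α0·u}. -/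
open MeasureTheory
open scoped ENNReal

lemma aux_pow_le (p : ℕ) : (p : ℝ) ^ p ≤ Real.exp 1 ^ p * p.factorial := by
  have h := Real.pow_div_factorial_le_exp (x := (p:ℝ)) (Nat.cast_nonneg p) p
  have hfac : (0:ℝ) < p.factorial := by positivity
  have : Real.exp (p:ℝ) = Real.exp 1 ^ p := by
    rw [← Real.exp_nat_mul]; norm_num
  rw [this] at h
  calc (p:ℝ)^p = (p:ℝ)^p / p.factorial * p.factorial := by field_simp
    _ ≤ Real.exp 1 ^ p * p.factorial := by
        apply mul_le_mul_of_nonneg_right h hfac.le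

lemma aux_fac (p : ℕ) : ((2*p).factorial : ℝ) ≤ 4 ^ p * (p.factorial)^2 := by
  have h1 : (2*p).factorial = (2*p).choose p * (p.factorial * p.factorial) := by
    have := Nat.choose_mul_factorial_mul_factorial (show p ≤ 2*p by omega)
    rw [← this]; rw [show 2*p - p = p by omega]; ring
  have h2 : (2*p).choose p ≤ 4 ^ p := by
    calc (2*p).choose p ≤ ∑ i ∈ Finset.range (2*p+1), (2*p).choose i :=
          Finset.single_le_sum (fun i _ => Nat.zero_le _) (by simp; omega)
      _ = 2 ^ (2*p) := Nat.sum_range_choose (2*p)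
      _ = 4 ^ p := by rw [pow_mul]; norm_num
  have := Nat.mul_le_mul_right (p.factorial * p.factorial) h2
  rw [← h1] at this
  calc ((2*p).factorial : ℝ) ≤ ((4^p * (p.factorial * p.factorial) : ℕ) : ℝ) := by exact_mod_cast this
    _ = 4 ^ p * (p.factorial)^2 := by push_cast; ring

lemma aux_CS {Ω : Type} [MeasurableSpace Ω] (P : Measure Ω) {A : Set Ω} (hA : MeasurableSet A)
    {g : Ω → ℝ≥0∞} (hg : Measurable g) :
    ∫⁻ ω in A, g ω ∂P ≤ (P A) ^ (1/2:ℝ) * (∫⁻ ω, (g ω)^2 ∂P) ^ (1/2:ℝ) := by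
  set f : Ω → ℝ≥0∞ := A.indicator (fun _ => 1) with hf
  have hpq : (2:ℝ).HolderConjugate 2 := Real.HolderConjugate.two_two
  have hmf : Measurable f := measurable_one.indicator hA
  have H := ENNReal.lintegral_mul_le_Lp_mul_Lq P hpq hmf.aemeasurable hg.aemeasurable
  have e1 : ∫⁻ a, (f * g) a ∂P = ∫⁻ ω in A, g ω ∂P := by
    rw [← lintegral_indicator hA]
    refine lintegral_congr fun a => ?_
    by_cases h : a ∈ A <;> simp [hf, Set.indicator_of_mem, Set.indicator_of_notMem, h]
  have e2 : ∫⁻ a, f a ^ (2:ℝ) ∂P = P A := by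
    have : ∀ a, f a ^ (2:ℝ) = f a := fun a => by
      by_cases h : a ∈ A <;>
        simp [hf, Set.indicator_of_mem, Set.indicator_of_notMem, h,
          ENNReal.zero_rpow_of_pos (by norm_num : (0:ℝ) < 2)]
    rw [lintegral_congr this, hf]
    rw [lintegral_indicator hA]
    simp
  have e3 : ∫⁻ a, g a ^ (2:ℝ) ∂P = ∫⁻ ω, (g ω)^2 ∂P := by
    refine lintegral_congr fun a => ?_
    rw [show (2:ℝ) = ((2:ℕ):ℝ) by norm_num, ENNReal.rpow_natCast]
  rw [e1, e2, e3] at H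
  exact H

/-- If a nonnegative random variable `X` satisfies
`c̃1 C1^p p! ≤ E[X^p] ≤ c̃2 C2^p p!` for every integer `p ≥ 1`, then
`P(X > u) ≥ c̃ e^{-α0 u}` for every `u ≥ 0`, where the constants `c̃, α0 > 0`
only depend on `c̃1, c̃2, C1, C2`. -/
theorem stmt13 (ctil1 ctil2 C1 C2 : ℝ)
    (h1 : 0 < ctil1) (h2 : 0 < ctil2) (h3 : 0 < C1) (h4 : 0 < C2) :
    ∃ ctil α0 : ℝ, 0 < ctil ∧ 0 < α0 ∧
      ∀ (Ω : Type) (_ : MeasurableSpace Ω) (P : Measure Ω), IsProbabilityMeasure P →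
      ∀ X : Ω → ℝ, Measurable X → (∀ ω, 0 ≤ X ω) →
      (∀ p : ℕ, 1 ≤ p →
        ENNReal.ofReal (ctil1 * C1 ^ p * p.factorial) ≤
            ∫⁻ ω, ENNReal.ofReal (X ω ^ p) ∂P ∧
          ∫⁻ ω, ENNReal.ofReal (X ω ^ p) ∂P ≤
            ENNReal.ofReal (ctil2 * C2 ^ p * p.factorial)) →
      ∀ u : ℝ, 0 ≤ u →
        ENNReal.ofReal (ctil * Real.exp (-α0 * u)) ≤ P {ω | u < X ω} := by
  set e := Real.exp 1 with he
  have hepos : 0 < e := Real.exp_pos 1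
  set r : ℝ := min (C1/(2*C2)) (1/2) with hrdef
  have hr0 : 0 < r := lt_min (by positivity) (by norm_num)
  have hr1 : r ≤ 1/2 := min_le_right _ _
  have hrlt1 : r < 1 := lt_of_le_of_lt hr1 (by norm_num)
  obtain ⟨p0, hp0⟩ : ∃ n : ℕ, (1/2:ℝ)^n < ctil1/2 :=
    exists_pow_lt_of_lt_one (by positivity) (by norm_num)
  set K := ctil1^2/(4*ctil2) with hKdef
  have hKpos : 0 < K := by positivity
  have hlogneg : Real.log r < 0 := Real.log_neg hr0 hrlt1
  refine ⟨K * r^(2*(p0+2)), (4*e/C1) * (-Real.log r),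
    by positivity, mul_pos (by positivity) (by linarith), ?_⟩
  intro Ω inst P hP X hX hXnn hmom u hu
  set p : ℕ := max (max 1 p0) ⌈2*e*u/C1⌉₊ with hpdef
  have hp1 : 1 ≤ p := le_trans (le_max_left 1 p0) (le_max_left _ _)
  have hpge : 2*e*u/C1 ≤ (p:ℝ) :=
    le_trans (Nat.le_ceil _) (Nat.cast_le.mpr (le_max_right _ _))
  have hple : (p:ℝ) ≤ 2*e*u/C1 + (p0+2) := by
    have h1' : p ≤ max 1 p0 + ⌈2*e*u/C1⌉₊ :=
      max_le (Nat.le_add_right _ _) (Nat.le_add_left _ _)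
    have h2' : (⌈2*e*u/C1⌉₊:ℝ) ≤ 2*e*u/C1 + 1 :=
      (Nat.ceil_lt_add_one (by positivity)).le
    have h3' : (max 1 p0 : ℕ) ≤ p0 + 1 := max_le (by omega) (by omega)
    have hcast : (p:ℝ) ≤ ((max 1 p0 : ℕ):ℝ) + (⌈2*e*u/C1⌉₊:ℝ) := by exact_mod_cast h1'
    have h3'' : ((max 1 p0 : ℕ) : ℝ) ≤ (p0:ℝ) + 1 := by exact_mod_cast h3'
    linarith
  have hhalf : (1/2:ℝ)^p ≤ ctil1/2 :=
    le_trans (pow_le_pow_of_le_one (by norm_num) (by norm_num)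
      (le_trans (le_max_right 1 p0) (le_max_left _ _))) hp0.le
  -- Step A : u^p ≤ L
  set L := ctil1/2 * (C1^p * (p.factorial:ℝ)) with hLdef
  have hLpos : 0 < L := by positivity
  have hupow : u^p ≤ L := by
    have hub : u ≤ C1 * p / (2*e) := by
      rw [le_div_iff₀ (by positivity)]
      rw [div_le_iff₀ h3] at hpge
      linarith
    calc u^p ≤ (C1 * p/(2*e))^p := pow_le_pow_left₀ hu hub p
      _ = C1^p * (p:ℝ)^p / (2^p * e^p) := by rw [div_pow, mul_pow, mul_pow]
      _ ≤ C1^p * (e^p * p.factorial) / (2^p * e^p) := by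
          gcongr
          exact aux_pow_le p
      _ = C1^p * (p.factorial:ℝ) * (1/2)^p := by
          rw [one_div_pow]
          field_simp
      _ ≤ C1^p * (p.factorial:ℝ) * (ctil1/2) := by
          apply mul_le_mul_of_nonneg_left hhalf (by positivity)
      _ = L := by rw [hLdef]; ring
  -- the event
  set A : Set Ω := {ω | u < X ω} with hAdef
  have hA : MeasurableSet A := measurableSet_lt measurable_const hX
  obtain ⟨hm1, -⟩ := hmom p hp1
  obtain ⟨-, hm2⟩ := hmom (2*p) (by omega)
  set I2 := ∫⁻ ω, ENNReal.ofReal (X ω ^ (2*p)) ∂P with hI2def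
  -- Step B : split
  have hsplit : ∫⁻ ω, ENNReal.ofReal (X ω^p) ∂P ≤
      ENNReal.ofReal (u^p) + ∫⁻ ω in A, ENNReal.ofReal (X ω^p) ∂P := by
    have hcompl : ∫⁻ ω in Aᶜ, ENNReal.ofReal (X ω^p) ∂P ≤ ENNReal.ofReal (u^p) := by
      calc ∫⁻ ω in Aᶜ, ENNReal.ofReal (X ω^p) ∂P
          ≤ ∫⁻ _ in Aᶜ, ENNReal.ofReal (u^p) ∂P := by
            refine setLIntegral_mono measurable_const (fun ω hω => ?_)
            exact ENNReal.ofReal_le_ofReal (pow_le_pow_left₀ (hXnn ω) (not_lt.mp hω) p)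
        _ = ENNReal.ofReal (u^p) * P Aᶜ := setLIntegral_const _ _
        _ ≤ ENNReal.ofReal (u^p) * 1 := by gcongr; exact prob_le_one
        _ = ENNReal.ofReal (u^p) := mul_one _
    calc ∫⁻ ω, ENNReal.ofReal (X ω^p) ∂P
        = (∫⁻ ω in A, ENNReal.ofReal (X ω^p) ∂P) + ∫⁻ ω in Aᶜ, ENNReal.ofReal (X ω^p) ∂P :=
          (lintegral_add_compl _ hA).symm
      _ ≤ (∫⁻ ω in A, ENNReal.ofReal (X ω^p) ∂P) + ENNReal.ofReal (u^p) :=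
          add_le_add le_rfl hcompl
      _ = _ := add_comm _ _
  -- Step C : Cauchy-Schwarz
  have hCS : ∫⁻ ω in A, ENNReal.ofReal (X ω^p) ∂P ≤ (P A)^(1/2:ℝ) * I2^(1/2:ℝ) := by
    have hgm : Measurable (fun ω => ENNReal.ofReal (X ω^p)) :=
      ENNReal.measurable_ofReal.comp (hX.pow_const p)
    have h := aux_CS P hA hgm
    have hsq : ∀ ω, (ENNReal.ofReal (X ω^p))^2 = ENNReal.ofReal (X ω^(2*p)) := fun ω => by
      rw [← ENNReal.ofReal_pow (pow_nonneg (hXnn ω) p), ← pow_mul, mul_comm p 2]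
    simpa only [hsq] using h
  have step2 : ENNReal.ofReal L ≤ (P A)^(1/2:ℝ) * I2^(1/2:ℝ) := by
    have h' : ENNReal.ofReal L + ENNReal.ofReal L ≤
        ENNReal.ofReal L + (P A)^(1/2:ℝ) * I2^(1/2:ℝ) := by
      calc ENNReal.ofReal L + ENNReal.ofReal L
          = ENNReal.ofReal (ctil1 * C1^p * p.factorial) := by
            rw [← ENNReal.ofReal_add hLpos.le hLpos.le]
            congr 1
            rw [hLdef]; ring
        _ ≤ ENNReal.ofReal (u^p) + (P A)^(1/2:ℝ) * I2^(1/2:ℝ) :=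
            hm1.trans (hsplit.trans (add_le_add le_rfl hCS))
        _ ≤ ENNReal.ofReal L + (P A)^(1/2:ℝ) * I2^(1/2:ℝ) :=
            add_le_add (ENNReal.ofReal_le_ofReal hupow) le_rfl
    exact (ENNReal.add_le_add_iff_left ENNReal.ofReal_ne_top).mp h'
  -- squaring
  set M2 := ctil2 * C2^(2*p) * ((2*p).factorial : ℝ) with hM2def
  have hM2pos : 0 < M2 := by positivity
  have step4 : ENNReal.ofReal (L^2) ≤ P A * ENNReal.ofReal M2 := by
    have hsq := pow_le_pow_left₀ zero_le step2 2
    have key : ((P A)^(1/2:ℝ) * I2^(1/2:ℝ))^2 = P A * I2 := by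
      rw [mul_pow, ← ENNReal.rpow_natCast ((P A)^(1/2:ℝ)) 2,
          ← ENNReal.rpow_natCast (I2^(1/2:ℝ)) 2, ← ENNReal.rpow_mul, ← ENNReal.rpow_mul,
          show (1/2:ℝ) * ((2:ℕ):ℝ) = 1 by norm_num, ENNReal.rpow_one, ENNReal.rpow_one]
    calc ENNReal.ofReal (L^2) = (ENNReal.ofReal L)^2 := ENNReal.ofReal_pow hLpos.le 2
      _ ≤ ((P A)^(1/2:ℝ) * I2^(1/2:ℝ))^2 := hsq
      _ = P A * I2 := key
      _ ≤ P A * ENNReal.ofReal M2 := mul_le_mul_right hm2 _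
  have step5 : ENNReal.ofReal (L^2 / M2) ≤ P A := by
    have h0 : ENNReal.ofReal M2 ≠ 0 := ne_of_gt (ENNReal.ofReal_pos.mpr hM2pos)
    refine (ENNReal.mul_le_mul_iff_left h0 ENNReal.ofReal_ne_top).mp ?_
    calc ENNReal.ofReal (L^2/M2) * ENNReal.ofReal M2
        = ENNReal.ofReal (L^2/M2 * M2) := (ENNReal.ofReal_mul (by positivity)).symm
      _ = ENNReal.ofReal (L^2) := by rw [div_mul_cancel₀ _ hM2pos.ne']
      _ ≤ P A * ENNReal.ofReal M2 := step4
  -- final real estimate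
  refine le_trans (ENNReal.ofReal_le_ofReal ?_) step5
  have hfirst : K * r^(2*p) ≤ L^2 / M2 := by
    rw [le_div_iff₀ hM2pos, hM2def]
    have hrle : r ≤ C1/(2*C2) := min_le_left _ _
    calc K * r^(2*p) * (ctil2 * C2^(2*p) * ((2*p).factorial : ℝ))
        ≤ K * (C1/(2*C2))^(2*p) * (ctil2 * C2^(2*p) * (4^p * (p.factorial:ℝ)^2)) := by
          gcongr
          exact aux_fac p
      _ = L^2 := by
          rw [hLdef, hKdef, div_pow, mul_pow,
            show (2:ℝ)^(2*p) = 4^p by rw [pow_mul]; norm_num]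
          field_simp
          ring
  have hsecond : r^(2*(p0+2)) * Real.exp (-((4*e/C1)*(-Real.log r)) * u) ≤ r^(2*p) := by
    have hc1 : (r:ℝ)^(2*p) = r ^ ((2*p : ℕ):ℝ) := (Real.rpow_natCast r (2*p)).symm
    have hc2 : (r:ℝ)^(2*(p0+2)) = r ^ ((2*(p0+2) : ℕ):ℝ) := (Real.rpow_natCast r (2*(p0+2))).symm
    have hexp : ((2*p:ℕ):ℝ) ≤ 4*e*u/C1 + ((2*(p0+2):ℕ):ℝ) := by
      push_cast
      have : 2*(2*e*u/C1) = 4*e*u/C1 := by ring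
      nlinarith [hple]
    have hmono : r ^ (4*e*u/C1 + ((2*(p0+2):ℕ):ℝ)) ≤ r ^ ((2*p:ℕ):ℝ) :=
      Real.rpow_le_rpow_of_exponent_ge hr0 hrlt1.le hexp
    have hadd : r ^ (4*e*u/C1 + ((2*(p0+2):ℕ):ℝ)) =
        r ^ (4*e*u/C1) * r ^ ((2*(p0+2):ℕ):ℝ) := Real.rpow_add hr0 _ _
    have hexp2 : r ^ (4*e*u/C1) = Real.exp (-((4*e/C1)*(-Real.log r)) * u) := by
      rw [Real.rpow_def_of_pos hr0]
      congr 1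
      ring
    rw [hc1, hc2, ← hexp2]
    calc r ^ ((2*(p0+2):ℕ):ℝ) * r ^ (4*e*u/C1)
        = r ^ (4*e*u/C1 + ((2*(p0+2):ℕ):ℝ)) := by rw [hadd]; ring
      _ ≤ r ^ ((2*p:ℕ):ℝ) := hmono
  calc K * r^(2*(p0+2)) * Real.exp (-((4*e/C1)*(-Real.log r)) * u)
      = K * (r^(2*(p0+2)) * Real.exp (-((4*e/C1)*(-Real.log r)) * u)) := by ring
    _ ≤ K * r^(2*p) := mul_le_mul_of_nonneg_left hsecond hKpos.le
    _ ≤ L^2 / M2 := hfirst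
end

section
/- Let f : [0,1] → ℝ be continuous. Suppose there exists an integer p0 ≥ 1 such that for every integer p ≥ p0 and every j ∈ {1, 2, …, 2^p}, |f(j·2^{−p}) − f((j−1)·2^{−p})| ≤ p·2^{−p/4}. Then there exists a finite constant C such that for all s, t ∈ [0,1] with s ≠ t, |f(s) − f(t)| ≤ C · (1 + log(1/|t−s|)) · |t−s|^{1/4}. -/
open Finset Filter Real Topology Set

set_option maxHeartbeats 1000000 in
/-- Chaining: if a continuous `f : [0,1] → ℝ` satisfies
`|f(j 2⁻ᵖ) − f((j−1) 2⁻ᵖ)| ≤ p 2^{−p/4}` for every `p ≥ p0` and `1 ≤ j ≤ 2ᵖ`,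
then `|f(s) − f(t)| ≤ C (1 + log(1/|t−s|)) |t−s|^{1/4}` for all distinct `s, t ∈ [0,1]`. -/
theorem stmt14 (f : ℝ → ℝ) (hf : ContinuousOn f (Set.Icc 0 1))
    (p0 : ℕ) (hp0 : 1 ≤ p0)
    (H : ∀ p : ℕ, p0 ≤ p → ∀ j : ℕ, 1 ≤ j → j ≤ 2 ^ p →
      |f ((j : ℝ) * 2 ^ (-(p : ℝ))) - f (((j : ℝ) - 1) * 2 ^ (-(p : ℝ)))| ≤
        (p : ℝ) * 2 ^ (-(p : ℝ) / 4)) :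
    ∃ C : ℝ, ∀ s ∈ Set.Icc (0:ℝ) 1, ∀ t ∈ Set.Icc (0:ℝ) 1, s ≠ t →
      |f s - f t| ≤ C * (1 + Real.log (1 / |t - s|)) * |t - s| ^ ((1 : ℝ) / 4) := by
  set ρ : ℝ := (2:ℝ) ^ (-(1:ℝ)/4) with hρdef
  have hρpos : 0 < ρ := Real.rpow_pos_of_pos two_pos _
  have hρlt : ρ < 1 := Real.rpow_lt_one_of_one_lt_of_neg one_lt_two (by norm_num)
  have hρpow : ∀ p : ℕ, (2:ℝ) ^ (-(p:ℝ)/4) = ρ ^ p := by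
    intro p
    rw [hρdef, ← Real.rpow_natCast ((2:ℝ) ^ (-(1:ℝ)/4)) p,
      ← Real.rpow_mul (by norm_num : (0:ℝ) ≤ 2)]
    ring_nf
  have hEpow : ∀ p : ℕ, (2:ℝ) ^ (-(p:ℝ)) = ((2:ℝ)^p)⁻¹ := by
    intro p
    rw [Real.rpow_neg (by norm_num : (0:ℝ) ≤ 2), Real.rpow_natCast]
  have H' : ∀ p : ℕ, p0 ≤ p → ∀ j : ℕ, 1 ≤ j → j ≤ 2^p →
      |f ((j:ℝ) * ((2:ℝ)^p)⁻¹) - f (((j-1:ℕ):ℝ) * ((2:ℝ)^p)⁻¹)| ≤ (p:ℝ) * ρ^p := by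
    intro p hp j hj1 hj2
    have h := H p hp j hj1 hj2
    rw [hρpow, hEpow] at h
    rwa [Nat.cast_sub hj1, Nat.cast_one]
  -- several steps at one level
  have steps : ∀ p : ℕ, p0 ≤ p → ∀ i j : ℕ, i ≤ j → j ≤ 2^p →
      |f ((j:ℝ) * ((2:ℝ)^p)⁻¹) - f ((i:ℝ) * ((2:ℝ)^p)⁻¹)| ≤
        ((j - i : ℕ):ℝ) * ((p:ℝ) * ρ^p) := by
    intro p hp i j hij
    induction j, hij using Nat.le_induction with
    | base => intro _; simp
    | succ j hij ih =>
      intro hj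
      have h1 := ih (le_trans (Nat.le_succ j) hj)
      have h2 := H' p hp (j+1) (Nat.succ_le_succ (Nat.zero_le j)) hj
      simp only [Nat.add_sub_cancel] at h2
      have tri := abs_sub_le (f (((j+1:ℕ):ℝ) * ((2:ℝ)^p)⁻¹)) (f ((j:ℝ) * ((2:ℝ)^p)⁻¹))
        (f ((i:ℝ) * ((2:ℝ)^p)⁻¹))
      have hcast : ((j+1-i:ℕ):ℝ) = ((j-i:ℕ):ℝ) + 1 := by
        have h : j+1-i = (j-i)+1 := by omega
        rw [h]; push_cast; ring
      rw [hcast]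
      push_cast at tri h2 ⊢
      nlinarith [h1, h2, tri]
  -- chaining down to level p
  have chain : ∀ p, p0 ≤ p → ∀ q, p ≤ q → ∀ k : ℕ, k ≤ 2^q →
      |f ((k:ℝ) * ((2:ℝ)^q)⁻¹) - f (((k / 2^(q-p) : ℕ):ℝ) * ((2:ℝ)^p)⁻¹)| ≤
        ∑ n ∈ Finset.Ico (p+1) (q+1), (n:ℝ) * ρ^n := by
    intro p hp q hq
    induction q, hq using Nat.le_induction with
    | base =>
      intro k hk
      simp [Nat.sub_self]
    | succ q hq ih =>
      intro k hk
      have hk2 : k/2 ≤ 2^q := by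
        have h : k / 2 ≤ 2^(q+1) / 2 := Nat.div_le_div_right hk
        rwa [pow_succ, Nat.mul_div_cancel _ (by norm_num)] at h
      have hij : 2*(k/2) ≤ k := by omega
      have h1 := steps (q+1) (le_trans hp (by omega)) (2*(k/2)) k hij hk
      have hle1 : ((k - 2*(k/2) : ℕ):ℝ) ≤ 1 := by
        exact_mod_cast (show k - 2*(k/2) ≤ 1 by omega)
      have heq : ((2*(k/2):ℕ):ℝ) * ((2:ℝ)^(q+1))⁻¹ = ((k/2:ℕ):ℝ) * ((2:ℝ)^q)⁻¹ := by
        push_cast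
        rw [pow_succ]
        have h2q : ((2:ℝ)^q) ≠ 0 := by positivity
        field_simp
      rw [heq] at h1
      have h2 := ih (k/2) hk2
      have hdd : k/2/2^(q-p) = k / 2^(q+1-p) := by
        rw [Nat.div_div_eq_div_mul]
        congr 1
        rw [show q+1-p = (q-p)+1 by omega, pow_succ]
        ring
      rw [hdd] at h2
      have tri := abs_sub_le (f ((k:ℝ) * ((2:ℝ)^(q+1))⁻¹)) (f (((k/2:ℕ):ℝ) * ((2:ℝ)^q)⁻¹))
        (f (((k / 2^(q+1-p) : ℕ):ℝ) * ((2:ℝ)^p)⁻¹))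
      rw [Finset.sum_Ico_succ_top (by omega : p+1 ≤ q+1)]
      have hmid : |f ((k:ℝ) * ((2:ℝ)^(q+1))⁻¹) - f (((k/2:ℕ):ℝ) * ((2:ℝ)^q)⁻¹)| ≤
          ((q+1:ℕ):ℝ) * ρ^(q+1) := by
        calc |f ((k:ℝ) * ((2:ℝ)^(q+1))⁻¹) - f (((k/2:ℕ):ℝ) * ((2:ℝ)^q)⁻¹)|
            ≤ ((k - 2*(k/2):ℕ):ℝ) * (((q+1:ℕ):ℝ) * ρ^(q+1)) := h1
          _ ≤ 1 * (((q+1:ℕ):ℝ) * ρ^(q+1)) := by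
              apply mul_le_mul_of_nonneg_right hle1
              positivity
          _ = ((q+1:ℕ):ℝ) * ρ^(q+1) := one_mul _
      push_cast at hmid h2 tri ⊢
      linarith
  -- geometric tail constant
  have hsumm : Summable (fun n : ℕ => (n:ℝ) * ρ^n) := by
    have h := summable_pow_mul_geometric_of_norm_lt_one (R := ℝ) 1
      (r := ρ) (by rw [Real.norm_eq_abs, abs_of_pos hρpos]; exact hρlt)
    simpa using h
  set A : ℝ := ∑' n : ℕ, (n:ℝ) * ρ^n with hAdef
  have hA0 : 0 ≤ A := tsum_nonneg (fun n => by positivity)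
  have tail : ∀ p : ℕ, 1 ≤ p → ∀ q, p ≤ q →
      ∑ n ∈ Finset.Ico (p+1) (q+1), (n:ℝ) * ρ^n ≤ 2*A*((p:ℝ)*ρ^p) := by
    intro p hp q hq
    rw [Finset.sum_Ico_eq_sum_range]
    set N := q+1-(p+1) with hN
    have hterm : ∀ i ∈ Finset.range N, ((p+1+i:ℕ):ℝ) * ρ^(p+1+i) ≤
        ((p:ℝ)*ρ^p) * (2*(((i+1:ℕ):ℝ) * ρ^(i+1))) := by
      intro i _
      have hp' : (1:ℝ) ≤ (p:ℝ) := by exact_mod_cast hp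
      have h1 : ((p+1+i:ℕ):ℝ) ≤ 2*(p:ℝ)*((i+1:ℕ):ℝ) := by
        push_cast
        nlinarith [Nat.cast_nonneg (α := ℝ) i]
      have h2 : ρ^(p+1+i) = ρ^p * ρ^(i+1) := by
        rw [show p+1+i = p+(i+1) by omega, pow_add]
      rw [h2]
      calc ((p+1+i:ℕ):ℝ) * (ρ^p * ρ^(i+1))
          ≤ (2*(p:ℝ)*((i+1:ℕ):ℝ)) * (ρ^p * ρ^(i+1)) := by
            apply mul_le_mul_of_nonneg_right h1 (by positivity)
        _ = ((p:ℝ)*ρ^p) * (2*(((i+1:ℕ):ℝ) * ρ^(i+1))) := by ring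
    have hpartial : ∑ i ∈ Finset.range N, ((i+1:ℕ):ℝ) * ρ^(i+1) ≤ A := by
      have hshift := Finset.sum_range_succ' (fun n : ℕ => (n:ℝ) * ρ^n) N
      have hsub : ∑ i ∈ Finset.range (N+1), (i:ℝ) * ρ^i ≤ A :=
        Summable.sum_le_tsum _ (fun n _ => by positivity) hsumm
      rw [hshift] at hsub
      push_cast at hsub ⊢
      simpa using hsub
    calc ∑ i ∈ Finset.range N, ((p+1+i:ℕ):ℝ) * ρ^(p+1+i)
        ≤ ∑ i ∈ Finset.range N, ((p:ℝ)*ρ^p) * (2*(((i+1:ℕ):ℝ) * ρ^(i+1))) :=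
          Finset.sum_le_sum hterm
      _ = 2*((p:ℝ)*ρ^p) * ∑ i ∈ Finset.range N, ((i+1:ℕ):ℝ) * ρ^(i+1) := by
          rw [Finset.mul_sum]
          congr 1; ext i; ring
      _ ≤ 2*((p:ℝ)*ρ^p) * A := by
          apply mul_le_mul_of_nonneg_left hpartial (by positivity)
      _ = 2*A*((p:ℝ)*ρ^p) := by ring
  -- sup bound
  obtain ⟨M0, hM0⟩ := (isCompact_Icc (a := (0:ℝ)) (b := 1)).exists_bound_of_continuousOn hf
  set M : ℝ := max M0 0 with hMdef
  have hM : ∀ x ∈ Set.Icc (0:ℝ) 1, |f x| ≤ M := fun x hx =>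
    le_trans (hM0 x hx) (le_max_left _ _)
  have hMnn : 0 ≤ M := le_max_right _ _
  refine ⟨2*M*2^(p0+1) + 4*(1+4*A), ?_⟩
  set C : ℝ := 2*M*2^(p0+1) + 4*(1+4*A) with hCdef
  have hC4 : 4*(1+4*A) ≤ C := by
    have h : (0:ℝ) ≤ 2*M*2^(p0+1) := by positivity
    linarith
  have hC0 : 0 ≤ C := by positivity
  -- main claim for s < t
  have key : ∀ s ∈ Set.Icc (0:ℝ) 1, ∀ t ∈ Set.Icc (0:ℝ) 1, s < t →
      |f s - f t| ≤ C * (1 + Real.log (1/(t-s))) * (t-s) ^ ((1:ℝ)/4) := by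
    intro s hs t ht hst
    set δ : ℝ := t - s with hδdef
    have hs0 : 0 ≤ s := hs.1
    have hs1 : s ≤ 1 := hs.2
    have ht0 : 0 ≤ t := ht.1
    have ht1 : t ≤ 1 := ht.2
    have hδ0 : 0 < δ := by rw [hδdef]; linarith
    have hδ1 : δ ≤ 1 := by rw [hδdef]; linarith
    have hL0 : 0 ≤ Real.log (1/δ) :=
      Real.log_nonneg (by rw [le_div_iff₀ hδ0]; linarith)
    have hδ14 : (0:ℝ) < δ ^ ((1:ℝ)/4) := Real.rpow_pos_of_pos hδ0 _
    by_cases hcase : ((2:ℝ)^(p0+1))⁻¹ ≤ δ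
    · -- crude bound
      have hcrude : |f s - f t| ≤ 2*M := by
        have h1 := hM s hs
        have h2 := hM t ht
        calc |f s - f t| ≤ |f s| + |f t| := abs_sub _ _
          _ ≤ 2*M := by linarith
      have hpow14 : ((2:ℝ)^(p0+1))⁻¹ ≤ δ ^ ((1:ℝ)/4) := by
        have hx0 : (0:ℝ) < ((2:ℝ)^(p0+1))⁻¹ := by positivity
        have hx1 : ((2:ℝ)^(p0+1))⁻¹ ≤ 1 := by
          rw [inv_le_one_iff₀]
          right
          exact one_le_pow₀ one_le_two
        calc ((2:ℝ)^(p0+1))⁻¹ = (((2:ℝ)^(p0+1))⁻¹) ^ ((1:ℝ)) := by rw [Real.rpow_one]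
          _ ≤ (((2:ℝ)^(p0+1))⁻¹) ^ ((1:ℝ)/4) :=
              Real.rpow_le_rpow_of_exponent_ge hx0 hx1 (by norm_num)
          _ ≤ δ ^ ((1:ℝ)/4) := Real.rpow_le_rpow (le_of_lt hx0) hcase (by norm_num)
      have step1 : 2*M ≤ 2*M*2^(p0+1) * δ ^ ((1:ℝ)/4) := by
        have h1 := mul_le_mul_of_nonneg_left hpow14
          (by positivity : (0:ℝ) ≤ 2*M*2^(p0+1))
        have h2p : ((2:ℝ)^(p0+1)) ≠ 0 := by positivity
        calc 2*M = 2*M*2^(p0+1) * ((2:ℝ)^(p0+1))⁻¹ := by field_simp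
          _ ≤ 2*M*2^(p0+1) * δ ^ ((1:ℝ)/4) := h1
      have step2 : 2*M*2^(p0+1) * δ ^ ((1:ℝ)/4) ≤ C * (1 + Real.log (1/δ)) * δ ^ ((1:ℝ)/4) := by
        apply mul_le_mul_of_nonneg_right _ (le_of_lt hδ14)
        have h1 : 2*M*2^(p0+1) ≤ C := by
          rw [hCdef]; nlinarith [hA0]
        nlinarith [hC0]
      linarith
    · -- chaining case
      push_neg at hcase
      have hloggt : ((p0:ℝ)+1) < Real.logb 2 (1/δ) := by
        rw [Real.lt_logb_iff_rpow_lt one_lt_two (by positivity)]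
        have he : (2:ℝ) ^ ((p0:ℝ)+1) = (2:ℝ)^(p0+1) := by
          rw [show ((p0:ℝ)+1) = ((p0+1 : ℕ):ℝ) by push_cast; ring, Real.rpow_natCast]
        rw [he, lt_div_iff₀ hδ0]
        have h2p : (0:ℝ) < (2:ℝ)^(p0+1) := by positivity
        calc (2:ℝ)^(p0+1) * δ < (2:ℝ)^(p0+1) * ((2:ℝ)^(p0+1))⁻¹ :=
              mul_lt_mul_of_pos_left hcase h2p
          _ = 1 := by field_simp
      set p : ℕ := ⌊Real.logb 2 (1/δ)⌋₊ with hpdef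
      have hpp0 : p0 + 1 ≤ p := by
        apply Nat.le_floor
        push_cast
        linarith
      have hp1 : 1 ≤ p := by omega
      have hpp0' : p0 ≤ p := by omega
      have hlogb0 : 0 ≤ Real.logb 2 (1/δ) := by
        have : (0:ℝ) ≤ (p0:ℝ)+1 := by positivity
        linarith
      have hplog : (p:ℝ) ≤ Real.logb 2 (1/δ) := Nat.floor_le hlogb0
      have hplog2 : Real.logb 2 (1/δ) < (p:ℝ) + 1 := Nat.lt_floor_add_one _
      have h2p0 : (0:ℝ) < (2:ℝ)^p := by positivity
      -- δ * 2^p ≤ 1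
      have hδle : δ * (2:ℝ)^p ≤ 1 := by
        have h1 : (2:ℝ) ^ ((p:ℕ):ℝ) ≤ (2:ℝ) ^ (Real.logb 2 (1/δ)) :=
          Real.rpow_le_rpow_of_exponent_le one_le_two hplog
        rw [Real.rpow_natCast, Real.rpow_logb two_pos (by norm_num) (by positivity)] at h1
        calc δ * (2:ℝ)^p ≤ δ * (1/δ) :=
              mul_le_mul_of_nonneg_left h1 (le_of_lt hδ0)
          _ = 1 := by field_simp
      -- 2^(-p) ≤ 2δ
      have hEδ : ((2:ℝ)^p)⁻¹ ≤ 2*δ := by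
        have h1 : (2:ℝ) ^ (Real.logb 2 (1/δ)) < (2:ℝ) ^ ((p:ℝ)+1) :=
          Real.rpow_lt_rpow_of_exponent_lt one_lt_two hplog2
        rw [Real.rpow_logb two_pos (by norm_num) (by positivity)] at h1
        have h2 : (2:ℝ) ^ ((p:ℝ)+1) = 2 * (2:ℝ)^p := by
          rw [show ((p:ℝ)+1) = ((p+1 : ℕ):ℝ) by push_cast; ring, Real.rpow_natCast, pow_succ]
          ring
        rw [h2, div_lt_iff₀ hδ0] at h1
        have h3 : (1:ℝ) ≤ (2*δ) * (2:ℝ)^p := by nlinarith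
        calc ((2:ℝ)^p)⁻¹ = 1 * ((2:ℝ)^p)⁻¹ := (one_mul _).symm
          _ ≤ ((2*δ) * (2:ℝ)^p) * ((2:ℝ)^p)⁻¹ :=
              mul_le_mul_of_nonneg_right h3 (by positivity)
          _ = 2*δ := by field_simp
      -- p ≤ 2(1 + log(1/δ))
      have hLlog : (p:ℝ) ≤ 2*(1 + Real.log (1/δ)) := by
        have hlogb : Real.logb 2 (1/δ) = Real.log (1/δ) / Real.log 2 :=
          (Real.log_div_log).symm
        have h2 := Real.log_two_gt_d9
        have hp' : (p:ℝ) * Real.log 2 ≤ Real.log (1/δ) := by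
          rw [hlogb] at hplog
          rw [← le_div_iff₀ (by linarith : (0:ℝ) < Real.log 2)]
          exact hplog
        have hp0' : (0:ℝ) ≤ (p:ℝ) := Nat.cast_nonneg p
        nlinarith [mul_le_mul_of_nonneg_left (le_of_lt h2) hp0']
      -- ρ^p ≤ 2 δ^{1/4}
      have hρδ : ρ^p ≤ 2 * δ ^ ((1:ℝ)/4) := by
        have a1 : ρ^p = (2:ℝ) ^ ((-(1:ℝ)/4) * (p:ℝ)) := by
          rw [← Real.rpow_natCast ρ p, hρdef,
            ← Real.rpow_mul (by norm_num : (0:ℝ) ≤ 2)]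
        have a2 : (((2:ℝ)^p)⁻¹) ^ ((1:ℝ)/4) = (2:ℝ) ^ ((-(p:ℝ)) * ((1:ℝ)/4)) := by
          rw [← hEpow p, ← Real.rpow_mul (by norm_num : (0:ℝ) ≤ 2)]
        have e1 : ρ^p = (((2:ℝ)^p)⁻¹) ^ ((1:ℝ)/4) := by
          rw [a1, a2]; ring_nf
        rw [e1]
        have b1 : (((2:ℝ)^p)⁻¹) ^ ((1:ℝ)/4) ≤ (2*δ) ^ ((1:ℝ)/4) :=
          Real.rpow_le_rpow (by positivity) hEδ (by norm_num)
        have b2 : (2*δ) ^ ((1:ℝ)/4) = (2:ℝ) ^ ((1:ℝ)/4) * δ ^ ((1:ℝ)/4) :=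
          Real.mul_rpow (by norm_num) (le_of_lt hδ0)
        have b3 : (2:ℝ) ^ ((1:ℝ)/4) ≤ 2 := by
          calc (2:ℝ) ^ ((1:ℝ)/4) ≤ (2:ℝ) ^ ((1:ℝ)) :=
              Real.rpow_le_rpow_of_exponent_le one_le_two (by norm_num)
            _ = 2 := Real.rpow_one 2
        calc (((2:ℝ)^p)⁻¹) ^ ((1:ℝ)/4) ≤ (2*δ) ^ ((1:ℝ)/4) := b1
          _ = (2:ℝ) ^ ((1:ℝ)/4) * δ ^ ((1:ℝ)/4) := b2
          _ ≤ 2 * δ ^ ((1:ℝ)/4) :=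
              mul_le_mul_of_nonneg_right b3 (le_of_lt hδ14)
      -- floors are within the interval
      have hflel : ∀ (x:ℝ), 0 ≤ x → x ≤ 1 → ∀ q : ℕ, ⌊x*2^q⌋₊ ≤ 2^q := by
        intro x hx0 hx1 q
        have h2q : (0:ℝ) < (2:ℝ)^q := by positivity
        have hle : x*2^q ≤ (((2^q : ℕ)):ℝ) := by
          push_cast
          nlinarith
        calc ⌊x*2^q⌋₊ ≤ ⌊(((2^q:ℕ)):ℝ)⌋₊ := Nat.floor_mono hle
          _ = 2^q := Nat.floor_natCast _
      have hdiv : ∀ (x:ℝ), 0 ≤ x → ∀ q, p ≤ q → ⌊x*2^q⌋₊ / 2^(q-p) = ⌊x*2^p⌋₊ := by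
        intro x hx q hq
        rw [← Nat.floor_div_natCast]
        congr 1
        have h2 : (2:ℝ)^q = 2^p * 2^(q-p) := by
          rw [← pow_add]; congr 1; omega
        push_cast
        rw [h2]
        have h2qp : ((2:ℝ)^(q-p)) ≠ 0 := by positivity
        field_simp
      -- bound for dyadic approximations at any level q ≥ p
      have hbd : ∀ q, p ≤ q →
          |f ((⌊s*2^q⌋₊:ℝ) * ((2:ℝ)^q)⁻¹) - f ((⌊t*2^q⌋₊:ℝ) * ((2:ℝ)^q)⁻¹)| ≤
            (1+4*A)*((p:ℝ)*ρ^p) := by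
        intro q hq
        have hcs := chain p hpp0' q hq ⌊s*2^q⌋₊ (hflel s hs0 hs1 q)
        rw [hdiv s hs0 q hq] at hcs
        have hct := chain p hpp0' q hq ⌊t*2^q⌋₊ (hflel t ht0 ht1 q)
        rw [hdiv t ht0 q hq] at hct
        have htails := tail p hp1 q hq
        have hij : ⌊s*2^p⌋₊ ≤ ⌊t*2^p⌋₊ := Nat.floor_mono (by nlinarith)
        have hj1 : ⌊t*2^p⌋₊ ≤ ⌊s*2^p⌋₊ + 1 := by
          have h1 : t*2^p ≤ s*2^p + 1 := by nlinarith
          calc ⌊t*2^p⌋₊ ≤ ⌊s*2^p + 1⌋₊ := Nat.floor_mono h1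
            _ = ⌊s*2^p⌋₊ + 1 := Nat.floor_add_one (by positivity)
        have hcent := steps p hpp0' ⌊s*2^p⌋₊ ⌊t*2^p⌋₊ hij (hflel t ht0 ht1 p)
        have hone : ((⌊t*2^p⌋₊ - ⌊s*2^p⌋₊ : ℕ):ℝ) ≤ 1 := by
          exact_mod_cast (show ⌊t*2^p⌋₊ - ⌊s*2^p⌋₊ ≤ 1 by omega)
        have hcent' : |f ((⌊s*2^p⌋₊:ℝ) * ((2:ℝ)^p)⁻¹) - f ((⌊t*2^p⌋₊:ℝ) * ((2:ℝ)^p)⁻¹)| ≤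
            (p:ℝ)*ρ^p := by
          rw [abs_sub_comm]
          calc |f ((⌊t*2^p⌋₊:ℝ) * ((2:ℝ)^p)⁻¹) - f ((⌊s*2^p⌋₊:ℝ) * ((2:ℝ)^p)⁻¹)|
              ≤ ((⌊t*2^p⌋₊ - ⌊s*2^p⌋₊:ℕ):ℝ) * ((p:ℝ)*ρ^p) := hcent
            _ ≤ 1 * ((p:ℝ)*ρ^p) := mul_le_mul_of_nonneg_right hone (by positivity)
            _ = (p:ℝ)*ρ^p := one_mul _
        have hcs' : |f ((⌊s*2^q⌋₊:ℝ) * ((2:ℝ)^q)⁻¹) - f ((⌊s*2^p⌋₊:ℝ) * ((2:ℝ)^p)⁻¹)| ≤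
            2*A*((p:ℝ)*ρ^p) := le_trans hcs htails
        have hct' : |f ((⌊t*2^p⌋₊:ℝ) * ((2:ℝ)^p)⁻¹) - f ((⌊t*2^q⌋₊:ℝ) * ((2:ℝ)^q)⁻¹)| ≤
            2*A*((p:ℝ)*ρ^p) := by
          rw [abs_sub_comm]
          exact le_trans hct htails
        have t1 := abs_sub_le (f ((⌊s*2^q⌋₊:ℝ) * ((2:ℝ)^q)⁻¹))
          (f ((⌊s*2^p⌋₊:ℝ) * ((2:ℝ)^p)⁻¹)) (f ((⌊t*2^q⌋₊:ℝ) * ((2:ℝ)^q)⁻¹))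
        have t2 := abs_sub_le (f ((⌊s*2^p⌋₊:ℝ) * ((2:ℝ)^p)⁻¹))
          (f ((⌊t*2^p⌋₊:ℝ) * ((2:ℝ)^p)⁻¹)) (f ((⌊t*2^q⌋₊:ℝ) * ((2:ℝ)^q)⁻¹))
        have hApp : (0:ℝ) ≤ (p:ℝ)*ρ^p := by positivity
        nlinarith [hcs', hct', hcent', t1, t2]
      -- limit along dyadic approximations
      have hlim : ∀ (x:ℝ), 0 ≤ x → x ≤ 1 →
          Tendsto (fun q : ℕ => f ((⌊x*2^q⌋₊:ℝ) * ((2:ℝ)^q)⁻¹)) atTop (nhds (f x)) := by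
        intro x hx0 hx1
        have hup : ∀ q : ℕ, (⌊x*2^q⌋₊:ℝ) * ((2:ℝ)^q)⁻¹ ≤ x := by
          intro q
          have h1 : (⌊x*2^q⌋₊:ℝ) ≤ x*2^q := Nat.floor_le (by positivity)
          have h2q : ((2:ℝ)^q) ≠ 0 := by positivity
          calc (⌊x*2^q⌋₊:ℝ) * ((2:ℝ)^q)⁻¹ ≤ (x*2^q) * ((2:ℝ)^q)⁻¹ :=
              mul_le_mul_of_nonneg_right h1 (by positivity)
            _ = x := by field_simp
        have hlo : ∀ q : ℕ, x - ((2:ℝ)⁻¹)^q ≤ (⌊x*2^q⌋₊:ℝ) * ((2:ℝ)^q)⁻¹ := by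
          intro q
          have h1 : x*2^q < (⌊x*2^q⌋₊:ℝ) + 1 := Nat.lt_floor_add_one _
          have h2q : ((2:ℝ)^q) ≠ 0 := by positivity
          have h3 : ((2:ℝ)⁻¹)^q = ((2:ℝ)^q)⁻¹ := inv_pow 2 q
          rw [h3]
          have h4 : (x*2^q - 1) * ((2:ℝ)^q)⁻¹ ≤ (⌊x*2^q⌋₊:ℝ) * ((2:ℝ)^q)⁻¹ :=
            mul_le_mul_of_nonneg_right (by linarith) (by positivity)
          have h5 : x - ((2:ℝ)^q)⁻¹ = (x*2^q - 1) * ((2:ℝ)^q)⁻¹ := by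
            field_simp
          rw [h5]
          exact h4
        have hmem : ∀ q : ℕ, (⌊x*2^q⌋₊:ℝ) * ((2:ℝ)^q)⁻¹ ∈ Set.Icc (0:ℝ) 1 := fun q =>
          ⟨by positivity, le_trans (hup q) hx1⟩
        have hlow : Tendsto (fun q : ℕ => x - ((2:ℝ)⁻¹)^q) atTop (nhds x) := by
          have hgeo := tendsto_pow_atTop_nhds_zero_of_lt_one
            (by norm_num : (0:ℝ) ≤ 2⁻¹) (by norm_num : (2:ℝ)⁻¹ < 1)
          have hc : Tendsto (fun _ : ℕ => x) atTop (nhds x) := tendsto_const_nhds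
          have := hc.sub hgeo
          simpa using this
        have htendA : Tendsto (fun q : ℕ => (⌊x*2^q⌋₊:ℝ) * ((2:ℝ)^q)⁻¹) atTop (nhds x) :=
          tendsto_of_tendsto_of_tendsto_of_le_of_le hlow tendsto_const_nhds hlo hup
        exact ((hf x ⟨hx0, hx1⟩).tendsto).comp
          (tendsto_nhdsWithin_iff.mpr ⟨htendA, Eventually.of_forall hmem⟩)
      have habs : Tendsto (fun q : ℕ =>
          |f ((⌊s*2^q⌋₊:ℝ) * ((2:ℝ)^q)⁻¹) - f ((⌊t*2^q⌋₊:ℝ) * ((2:ℝ)^q)⁻¹)|)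
          atTop (nhds |f s - f t|) :=
        ((hlim s hs0 hs1).sub (hlim t ht0 ht1)).abs
      have hkey : |f s - f t| ≤ (1+4*A)*((p:ℝ)*ρ^p) :=
        le_of_tendsto habs (eventually_atTop.mpr ⟨p, hbd⟩)
      -- final arithmetic
      have hmul : (p:ℝ)*ρ^p ≤ (2*(1+Real.log (1/δ))) * (2 * δ ^ ((1:ℝ)/4)) :=
        mul_le_mul hLlog hρδ (by positivity) (by linarith)
      have hfac : 0 ≤ (1+Real.log (1/δ)) * δ ^ ((1:ℝ)/4) :=
        mul_nonneg (by linarith) (le_of_lt hδ14)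
      calc |f s - f t| ≤ (1+4*A)*((p:ℝ)*ρ^p) := hkey
        _ ≤ (1+4*A)*((2*(1+Real.log (1/δ))) * (2 * δ ^ ((1:ℝ)/4))) :=
            mul_le_mul_of_nonneg_left hmul (by linarith)
        _ = (4*(1+4*A)) * ((1+Real.log (1/δ)) * δ ^ ((1:ℝ)/4)) := by ring
        _ ≤ C * ((1+Real.log (1/δ)) * δ ^ ((1:ℝ)/4)) :=
            mul_le_mul_of_nonneg_right hC4 hfac
        _ = C * (1+Real.log (1/δ)) * δ ^ ((1:ℝ)/4) := by ring
  intro s hs t ht hst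
  rcases hst.lt_or_gt with h | h
  · rw [abs_of_pos (by linarith : (0:ℝ) < t - s)]
    exact key s hs t ht h
  · rw [abs_sub_comm (f s) (f t), abs_sub_comm t s,
      abs_of_pos (by linarith : (0:ℝ) < s - t)]
    exact key t ht s hs h
end
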